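/- arXiv:1607.05372 — 6 statements merged into one kernel-verified Lean document; each statement's English description precedes it below -/
import Mathlib

section
/- Let A and B be irreducible non-permutation {0,1}-matrices. If the one-sided topological Markov shifts (X_A, σ_A) and (X_B, σ_B) are eventually one-sided conjugate, then they are uniformly continuously orbit equivalent. -/
/-- The group structure on self-homeomorphisms, with `(f * g) x = f (g x)`. -/
instance homeoGroup {X : Type*} [TopologicalSpace X] : Group (X ≃ₜ X) where
  mul f g := g.trans f
  one := Homeomorph.refl X
  inv := Homeomorph.symm
  mul_assoc _ _ _ := Homeomorph.ext fun _ => rfl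
  one_mul _ := Homeomorph.ext fun _ => rfl
  mul_one _ := Homeomorph.ext fun _ => rfl
  inv_mul_cancel f := Homeomorph.ext f.symm_apply_apply

private lemma iter_swap {α : Type*} (f : α → α) (a b : ℕ) (x : α) :
    f^[a] (f^[b] x) = f^[b] (f^[a] x) := by
  rw [← Function.iterate_add_apply, ← Function.iterate_add_apply, add_comm]

/-- The one-sided topological Markov shift space `X_A` of a 0-1 matrix `A`. -/
def MarkovShift {N : ℕ} (A : Matrix (Fin N) (Fin N) ℕ) : Set (ℕ → Fin N) :=
  {x | ∀ n, A (x n) (x (n + 1)) = 1}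

/-- The shift transformation `σ_A` on `X_A`. -/
def shift {N : ℕ} (A : Matrix (Fin N) (Fin N) ℕ) :
    ↥(MarkovShift A) → ↥(MarkovShift A) :=
  fun x => ⟨fun n => x.1 (n + 1), fun n => x.2 (n + 1)⟩

/-- `A` is a {0,1}-matrix which is irreducible and not a permutation matrix. -/
structure IsIrredNonPerm {N : ℕ} (A : Matrix (Fin N) (Fin N) ℕ) : Prop where
  zero_one : ∀ i j, A i j = 0 ∨ A i j = 1
  irreducible : ∀ i j, ∃ n, 1 ≤ n ∧ 0 < (A ^ n) i j
  not_perm : ¬ ∃ e : Equiv.Perm (Fin N), ∀ i j, A i j = if e i = j then 1 else 0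

/-- The continuous full group `Γ_A`. -/
def fullGroup {N : ℕ} (A : Matrix (Fin N) (Fin N) ℕ) :
    Subgroup (↥(MarkovShift A) ≃ₜ ↥(MarkovShift A)) where
  carrier := {τ | ∃ k l : ↥(MarkovShift A) → ℕ, Continuous k ∧ Continuous l ∧
      ∀ x, (shift A)^[k x] (τ x) = (shift A)^[l x] x}
  one_mem' := ⟨fun _ => 0, fun _ => 0, continuous_const, continuous_const, fun _ => rfl⟩
  mul_mem' := by
    rintro τ₁ τ₂ ⟨k, l, hk, hl, hrel⟩ ⟨k', l', hk', hl', hrel'⟩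
    refine ⟨fun x => k (τ₂ x) + k' x, fun x => l (τ₂ x) + l' x,
      (hk.comp τ₂.continuous).add hk', (hl.comp τ₂.continuous).add hl', fun x => ?_⟩
    show (shift A)^[k (τ₂ x) + k' x] (τ₁ (τ₂ x)) = (shift A)^[l (τ₂ x) + l' x] x
    rw [add_comm (k (τ₂ x)) (k' x), Function.iterate_add_apply, hrel (τ₂ x), iter_swap,
      hrel' x, ← Function.iterate_add_apply]
  inv_mem' := by
    rintro τ ⟨k, l, hk, hl, hrel⟩
    refine ⟨fun x => l (τ.symm x), fun x => k (τ.symm x),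
      hl.comp τ.symm.continuous, hk.comp τ.symm.continuous, fun x => ?_⟩
    show (shift A)^[l (τ.symm x)] (τ.symm x) = (shift A)^[k (τ.symm x)] x
    have h0 := hrel (τ.symm x)
    rw [τ.apply_symm_apply] at h0
    exact h0.symm

/-- The subgroup `Γ_A^{AF}` of the continuous full group. -/
def afGroup {N : ℕ} (A : Matrix (Fin N) (Fin N) ℕ) :
    Subgroup (↥(MarkovShift A) ≃ₜ ↥(MarkovShift A)) where
  carrier := {τ | ∃ K : ℕ, ∀ x, (shift A)^[K] (τ x) = (shift A)^[K] x}
  one_mem' := ⟨0, fun _ => rfl⟩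
  mul_mem' := by
    rintro τ₁ τ₂ ⟨K, hK⟩ ⟨K', hK'⟩
    refine ⟨K' + K, fun x => ?_⟩
    show (shift A)^[K' + K] (τ₁ (τ₂ x)) = (shift A)^[K' + K] x
    rw [Function.iterate_add_apply, hK (τ₂ x), iter_swap, hK' x, iter_swap,
      ← Function.iterate_add_apply]
  inv_mem' := by
    rintro τ ⟨K, hK⟩
    refine ⟨K, fun x => ?_⟩
    show (shift A)^[K] (τ.symm x) = (shift A)^[K] x
    have h0 := hK (τ.symm x)
    rw [τ.apply_symm_apply] at h0
    exact h0.symm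

/-- `h`, together with `k₁, l₁, k₂, l₂`, witnesses a continuous orbit equivalence
between `(X_A, σ_A)` and `(X_B, σ_B)`. -/
def COEWitness {N M : ℕ} (A : Matrix (Fin N) (Fin N) ℕ) (B : Matrix (Fin M) (Fin M) ℕ)
    (h : ↥(MarkovShift A) ≃ₜ ↥(MarkovShift B)) (k₁ l₁ : ↥(MarkovShift A) → ℕ)
    (k₂ l₂ : ↥(MarkovShift B) → ℕ) : Prop :=
  Continuous k₁ ∧ Continuous l₁ ∧ Continuous k₂ ∧ Continuous l₂ ∧
  (∀ x, (shift B)^[k₁ x] (h (shift A x)) = (shift B)^[l₁ x] (h x)) ∧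
  (∀ y, (shift A)^[k₂ y] (h.symm (shift B y)) = (shift A)^[l₂ y] (h.symm y))

/-- `(X_A, σ_A)` and `(X_B, σ_B)` are continuously orbit equivalent. -/
def COE {N M : ℕ} (A : Matrix (Fin N) (Fin N) ℕ) (B : Matrix (Fin M) (Fin M) ℕ) : Prop :=
  ∃ h k₁ l₁ k₂ l₂, COEWitness A B h k₁ l₁ k₂ l₂

/-- The extra uniformity condition on a homeomorphism `h : X_A → X_B`:
elements of `Γ_A^{AF}` and `Γ_B^{AF}` are uniformly intertwined by `h`. -/
def UniformWitness {N M : ℕ} (A : Matrix (Fin N) (Fin N) ℕ) (B : Matrix (Fin M) (Fin M) ℕ)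
    (h : ↥(MarkovShift A) ≃ₜ ↥(MarkovShift B)) : Prop :=
  (∀ τ₁ ∈ afGroup A, ∃ K : ℕ, ∀ x, (shift B)^[K] (h (τ₁ x)) = (shift B)^[K] (h x)) ∧
  (∀ τ₂ ∈ afGroup B, ∃ K : ℕ, ∀ y, (shift A)^[K] (h.symm (τ₂ y)) = (shift A)^[K] (h.symm y))

/-- `(X_A, σ_A)` and `(X_B, σ_B)` are uniformly continuously orbit equivalent. -/
def UCOE {N M : ℕ} (A : Matrix (Fin N) (Fin N) ℕ) (B : Matrix (Fin M) (Fin M) ℕ) : Prop :=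
  ∃ h k₁ l₁ k₂ l₂, COEWitness A B h k₁ l₁ k₂ l₂ ∧ UniformWitness A B h

/-- `(X_A, σ_A)` and `(X_B, σ_B)` are uniformly orbit equivalent. -/
def UOE {N M : ℕ} (A : Matrix (Fin N) (Fin N) ℕ) (B : Matrix (Fin M) (Fin M) ℕ) : Prop :=
  ∃ h : ↥(MarkovShift A) ≃ₜ ↥(MarkovShift B), UniformWitness A B h

/-- `(X_A, σ_A)` and `(X_B, σ_B)` are eventually one-sided conjugate. -/
def EventuallyConjugate {N M : ℕ} (A : Matrix (Fin N) (Fin N) ℕ)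
    (B : Matrix (Fin M) (Fin M) ℕ) : Prop :=
  ∃ (h : ↥(MarkovShift A) ≃ₜ ↥(MarkovShift B)) (K₁ K₂ : ℕ),
    (∀ x, (shift B)^[K₁] (h (shift A x)) = (shift B)^[K₁ + 1] (h x)) ∧
    (∀ y, (shift A)^[K₂] (h.symm (shift B y)) = (shift A)^[K₂ + 1] (h.symm y))

/-- Conjugation of a self-homeomorphism of `X_A` by `h : X_A ≃ₜ X_B`,
i.e. `h ∘ τ ∘ h⁻¹`. -/
def conjHomeo {N M : ℕ} {A : Matrix (Fin N) (Fin N) ℕ} {B : Matrix (Fin M) (Fin M) ℕ}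
    (h : ↥(MarkovShift A) ≃ₜ ↥(MarkovShift B))
    (τ : ↥(MarkovShift A) ≃ₜ ↥(MarkovShift A)) : ↥(MarkovShift B) ≃ₜ ↥(MarkovShift B) :=
  (h.symm.trans τ).trans h

/-- A point `x ∈ X_A` is eventually periodic. -/
def EventuallyPeriodicPt {N : ℕ} (A : Matrix (Fin N) (Fin N) ℕ)
    (x : ↥(MarkovShift A)) : Prop :=
  ∃ r s : ℕ, s < r ∧ (shift A)^[r] x = (shift A)^[s] x

/-- `f^k(x) = Σ_{i=0}^{k-1} f(σ_A^i(x))`. -/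
def cocycleSum {N : ℕ} (A : Matrix (Fin N) (Fin N) ℕ) (f : ↥(MarkovShift A) → ℕ)
    (k : ℕ) (x : ↥(MarkovShift A)) : ℕ :=
  ∑ i ∈ Finset.range k, f ((shift A)^[i] x)

private lemma ec_iterate {N M : ℕ} {A : Matrix (Fin N) (Fin N) ℕ}
    {B : Matrix (Fin M) (Fin M) ℕ} {h : ↥(MarkovShift A) ≃ₜ ↥(MarkovShift B)} {K₁ : ℕ}
    (hec : ∀ x, (shift B)^[K₁] (h (shift A x)) = (shift B)^[K₁ + 1] (h x)) :
    ∀ (n : ℕ) (x), (shift B)^[K₁] (h ((shift A)^[n] x)) = (shift B)^[K₁ + n] (h x) := by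
  intro n
  induction n with
  | zero => intro x; rfl
  | succ n ih =>
    intro x
    rw [Function.iterate_succ_apply, ih (shift A x), Function.iterate_add_apply,
      Function.iterate_add_apply]
    have := hec x
    rw [Function.iterate_add_apply] at this
    rw [iter_swap, this, Function.iterate_one, iter_swap, Function.iterate_succ_apply]

/-- eventual one-sided conjugacy implies uniformly continuous
orbit equivalence. -/
theorem eventuallyConjugate_implies_ucoe {N M : ℕ}
    (A : Matrix (Fin N) (Fin N) ℕ) (B : Matrix (Fin M) (Fin M) ℕ)
    (hA : IsIrredNonPerm A) (hB : IsIrredNonPerm B)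
    (hec : EventuallyConjugate A B) : UCOE A B := by
  obtain ⟨h, K₁, K₂, h1, h2⟩ := hec
  refine ⟨h, fun _ => K₁, fun _ => K₁ + 1, fun _ => K₂, fun _ => K₂ + 1,
    ⟨continuous_const, continuous_const, continuous_const, continuous_const, h1, h2⟩, ?_, ?_⟩
  · rintro τ ⟨K, hK⟩
    refine ⟨K₁ + K, fun x => ?_⟩
    rw [← ec_iterate h1 K (τ x), hK x, ec_iterate h1 K x]
  · rintro τ ⟨K, hK⟩
    refine ⟨K₂ + K, fun y => ?_⟩
    rw [← ec_iterate h2 K (τ y), hK y, ec_iterate h2 K y]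
end

section
/- Let A and B be irreducible non-permutation {0,1}-matrices. If the one-sided topological Markov shifts (X_A, σ_A) and (X_B, σ_B) are uniformly continuously orbit equivalent, then there exists a homeomorphism h: X_A → X_B such that h ∘ Γ_A ∘ h^{-1} = Γ_B and h ∘ Γ_A^{AF} ∘ h^{-1} = Γ_B^{AF}. -/
private lemma shift_cont {N : ℕ} (A : Matrix (Fin N) (Fin N) ℕ) :
    Continuous (shift A) := by
  apply Continuous.subtype_mk
  exact continuous_pi fun n => (continuous_apply (n + 1)).comp continuous_subtype_val

private lemma cocycleSum_cont {N : ℕ} (A : Matrix (Fin N) (Fin N) ℕ)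
    {f : ↥(MarkovShift A) → ℕ} (hf : Continuous f) (n : ℕ) :
    Continuous (cocycleSum A f n) := by
  unfold cocycleSum
  exact continuous_finset_sum _ fun i _ => hf.comp ((shift_cont A).iterate i)

private lemma pieces_cont {X Y : Type*} [TopologicalSpace X] [TopologicalSpace Y]
    {F : ℕ → X → Y} (hF : ∀ k, Continuous (F k)) {n : X → ℕ} (hn : Continuous n) :
    Continuous (fun x => F (n x) x) := by
  rw [continuous_iff_continuousAt]
  intro x₀
  have hev : ∀ᶠ x in nhds x₀, F (n x₀) x = F (n x) x := by
    have : ∀ᶠ x in nhds x₀, n x = n x₀ :=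
      (hn.isOpen_preimage {n x₀} (isOpen_discrete _)).mem_nhds rfl
    filter_upwards [this] with x hx
    rw [hx]
  exact ((hF (n x₀)).continuousAt).congr hev

private lemma cocycle_step {N M : ℕ} {A : Matrix (Fin N) (Fin N) ℕ}
    {B : Matrix (Fin M) (Fin M) ℕ} {h : ↥(MarkovShift A) ≃ₜ ↥(MarkovShift B)}
    {k₁ l₁ : ↥(MarkovShift A) → ℕ}
    (hrel : ∀ x, (shift B)^[k₁ x] (h (shift A x)) = (shift B)^[l₁ x] (h x)) :
    ∀ n x, (shift B)^[cocycleSum A k₁ n x] (h ((shift A)^[n] x)) =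
      (shift B)^[cocycleSum A l₁ n x] (h x) := by
  intro n
  induction n with
  | zero => intro x; rfl
  | succ n ih =>
    intro x
    have e1 : cocycleSum A k₁ (n + 1) x
        = cocycleSum A k₁ n x + k₁ ((shift A)^[n] x) := Finset.sum_range_succ _ _
    have e2 : cocycleSum A l₁ (n + 1) x
        = cocycleSum A l₁ n x + l₁ ((shift A)^[n] x) := Finset.sum_range_succ _ _
    rw [e1, e2, Function.iterate_succ_apply', Function.iterate_add_apply,
      hrel ((shift A)^[n] x), iter_swap, ih x, iter_swap,
      ← Function.iterate_add_apply, add_comm]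

private lemma conj_mem_full {N M : ℕ} {A : Matrix (Fin N) (Fin N) ℕ}
    {B : Matrix (Fin M) (Fin M) ℕ} {h : ↥(MarkovShift A) ≃ₜ ↥(MarkovShift B)}
    {k₁ l₁ : ↥(MarkovShift A) → ℕ} (hk₁ : Continuous k₁) (hl₁ : Continuous l₁)
    (hrel : ∀ x, (shift B)^[k₁ x] (h (shift A x)) = (shift B)^[l₁ x] (h x))
    {τ : ↥(MarkovShift A) ≃ₜ ↥(MarkovShift A)} (hτ : τ ∈ fullGroup A) :
    conjHomeo h τ ∈ fullGroup B := by
  obtain ⟨k, l, hk, hl, hrelτ⟩ := hτ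
  refine ⟨fun y => cocycleSum A k₁ (l (h.symm y)) (h.symm y)
      + cocycleSum A l₁ (k (h.symm y)) (τ (h.symm y)),
    fun y => cocycleSum A k₁ (k (h.symm y)) (τ (h.symm y))
      + cocycleSum A l₁ (l (h.symm y)) (h.symm y), ?_, ?_, ?_⟩
  · exact (pieces_cont (fun m => (cocycleSum_cont A hk₁ m).comp h.symm.continuous)
      (hl.comp h.symm.continuous)).add
      (pieces_cont (fun m => (cocycleSum_cont A hl₁ m).comp
        (τ.continuous.comp h.symm.continuous)) (hk.comp h.symm.continuous))
  · exact (pieces_cont (fun m => (cocycleSum_cont A hk₁ m).comp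
        (τ.continuous.comp h.symm.continuous)) (hk.comp h.symm.continuous)).add
      (pieces_cont (fun m => (cocycleSum_cont A hl₁ m).comp h.symm.continuous)
        (hl.comp h.symm.continuous))
  · intro y
    set x := h.symm y with hx
    have s1 := cocycle_step hrel (k x) (τ x)
    rw [hrelτ x] at s1
    have s2 := cocycle_step hrel (l x) x
    have key : (shift B)^[cocycleSum A k₁ (l x) x + cocycleSum A l₁ (k x) (τ x)]
        (h (τ x)) = (shift B)^[cocycleSum A k₁ (k x) (τ x) + cocycleSum A l₁ (l x) x]
        (h x) := by
      rw [Function.iterate_add_apply, ← s1, iter_swap, s2,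
        ← Function.iterate_add_apply]
    show (shift B)^[_] (h (τ x)) = (shift B)^[_] y
    rw [key, hx, h.apply_symm_apply]

private lemma conj_conj {N M : ℕ} {A : Matrix (Fin N) (Fin N) ℕ}
    {B : Matrix (Fin M) (Fin M) ℕ} (h : ↥(MarkovShift A) ≃ₜ ↥(MarkovShift B))
    (ρ : ↥(MarkovShift B) ≃ₜ ↥(MarkovShift B)) :
    conjHomeo h (conjHomeo h.symm ρ) = ρ := by
  apply Homeomorph.ext
  intro y
  simp [conjHomeo]

/-- uniformly continuous orbit equivalence gives a homeomorphism
conjugating `Γ_A` onto `Γ_B` and `Γ_A^{AF}` onto `Γ_B^{AF}`. -/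
theorem ucoe_implies_conjugation_of_full_groups {N M : ℕ}
    (A : Matrix (Fin N) (Fin N) ℕ) (B : Matrix (Fin M) (Fin M) ℕ)
    (hA : IsIrredNonPerm A) (hB : IsIrredNonPerm B)
    (huc : UCOE A B) :
    ∃ h : ↥(MarkovShift A) ≃ₜ ↥(MarkovShift B),
      conjHomeo h '' (fullGroup A : Set _) = (fullGroup B : Set _) ∧
      conjHomeo h '' (afGroup A : Set _) = (afGroup B : Set _) := by
  obtain ⟨h, k₁, l₁, k₂, l₂, ⟨hk₁, hl₁, hk₂, hl₂, hrel₁, hrel₂⟩, hu₁, hu₂⟩ := huc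
  refine ⟨h, subset_antisymm ?_ ?_, subset_antisymm ?_ ?_⟩
  · rintro _ ⟨τ, hτ, rfl⟩
    exact conj_mem_full hk₁ hl₁ hrel₁ hτ
  · intro ρ hρ
    exact ⟨conjHomeo h.symm ρ, conj_mem_full hk₂ hl₂ hrel₂ hρ, conj_conj h ρ⟩
  · rintro _ ⟨τ, hτ, rfl⟩
    obtain ⟨K, hK⟩ := hu₁ τ hτ
    refine ⟨K, fun y => ?_⟩
    show (shift B)^[K] (h (τ (h.symm y))) = (shift B)^[K] y
    rw [hK (h.symm y), h.apply_symm_apply]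
  · intro ρ hρ
    obtain ⟨K, hK⟩ := hu₂ ρ hρ
    refine ⟨conjHomeo h.symm ρ, ⟨K, fun x => ?_⟩, conj_conj h ρ⟩
    show (shift A)^[K] (h.symm (ρ (h x))) = (shift A)^[K] x
    rw [hK (h x), h.symm_apply_apply]
end

section
/- Let A and B be irreducible non-permutation {0,1}-matrices, and let (X_A, σ_A) and (X_B, σ_B) be continuously orbit equivalent via a homeomorphism h: X_A → X_B with continuous functions k_1, l_1: X_A → ℤ_{≥0} and k_2, l_2: X_B → ℤ_{≥0}. If either of the cocycle functions c_1 = l_1 − k_1 on X_A or c_2 = l_2 − k_2 on X_B is a constant function, then both c_1 and c_2 are identically equal to 1. -/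
open Function Filter Topology

section IterateCounting

variable {α : Type*} {σ : α → α}

lemma finite_preimage_iterate (hσ : ∀ t, (σ ⁻¹' {t}).Finite) (n : ℕ) (t : α) :
    (σ^[n] ⁻¹' {t}).Finite := by
  induction n generalizing t with
  | zero => exact Set.finite_singleton t
  | succ n ih =>
    rw [iterate_succ, Set.preimage_comp]
    exact (ih t).preimage' fun b _ => hσ b

/-- `g` maps the fibre `S = σ^[n]⁻¹{t}` onto `U = σ^[n + c]⁻¹{t}` while `σ^[c]` maps `U` onto `S`,
so `g` cannot identify two points of `S`. -/
lemma injective_of_iterate_add_comp_eq (hσ : Surjective σ) (hfin : ∀ t, (σ ⁻¹' {t}).Finite)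
    {g : α → α} (hg : Surjective g) {n c : ℕ} (hrel : ∀ x, σ^[n + c] (g x) = σ^[n] x) :
    Injective g := by
  intro x₁ x₂ hx
  by_contra hne
  set t := σ^[n] x₁
  set S := σ^[n] ⁻¹' {t}
  set U := σ^[n + c] ⁻¹' {t}
  have hS : S.Finite := finite_preimage_iterate hfin n t
  have hU : U.Finite := finite_preimage_iterate hfin (n + c) t
  have hSU : S ⊆ σ^[c] '' U := by
    intro s hs
    obtain ⟨u, rfl⟩ := hσ.iterate c s
    exact ⟨u, (iterate_add_apply σ n c u).trans hs, rfl⟩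
  have hUS : U ⊆ g '' S := by
    intro u hu
    obtain ⟨s, rfl⟩ := hg u
    exact ⟨s, (hrel s).symm.trans hu, rfl⟩
  have hx₂ : x₂ ∈ S := (hrel x₂).symm.trans (hx ▸ hrel x₁)
  have hlt : (g '' S).ncard < S.ncard := lt_of_le_of_ne (Set.ncard_image_le hS) fun heq =>
    hne (Set.injOn_of_ncard_image_eq heq hS rfl hx₂ hx)
  exact lt_irrefl _ <| calc
    S.ncard ≤ (σ^[c] '' U).ncard := Set.ncard_le_ncard hSU (hU.image _)
    _ ≤ U.ncard := Set.ncard_image_le hU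
    _ ≤ (g '' S).ncard := Set.ncard_le_ncard hUS (hS.image _)
    _ < S.ncard := hlt

end IterateCounting

section OrbitRelation

variable {α β : Type*} {σ : α → α} {τ : β → β} {H : α → β} {k l : α → ℕ} {e : ℕ}

lemma exists_iterate_map_iterate_eq (hrel : ∀ x, τ^[k x] (H (σ x)) = τ^[l x] (H x))
    (hkl : ∀ x, l x = k x + e) (m : ℕ) (x : α) :
    ∃ K, τ^[K] (H (σ^[m] x)) = τ^[K + m * e] (H x) := by
  induction m with
  | zero => exact ⟨0, by simp⟩
  | succ m ih =>
    obtain ⟨K, hK⟩ := ih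
    set z := σ^[m] x
    refine ⟨K + k z, ?_⟩
    calc τ^[K + k z] (H (σ^[m + 1] x)) = τ^[K] (τ^[k z] (H (σ z))) := by
          rw [iterate_succ_apply', iterate_add_apply]
      _ = τ^[l z] (τ^[K] (H z)) := by rw [hrel, iter_swap]
      _ = τ^[K + k z + (m + 1) * e] (H x) := by
          rw [hK, ← iterate_add_apply, hkl]
          ring_nf

lemma eq_one_of_orbit_relations {H' : β → α} {k' l' : β → ℕ}
    (hrel : ∀ x, τ^[k x] (H (σ x)) = τ^[l x] (H x))
    (hrel' : ∀ y, σ^[k' y] (H' (τ y)) = σ^[l' y] (H' y)) (hHH' : ∀ y, H (H' y) = y)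
    (hkl : ∀ x, l x = k x + e) {y : β} (hy : Injective fun n => τ^[n] y) :
    e = 1 ∧ l' y = k' y + 1 := by
  obtain ⟨K, hK⟩ := exists_iterate_map_iterate_eq hrel hkl (k' y) (H' (τ y))
  obtain ⟨K', hK'⟩ := exists_iterate_map_iterate_eq hrel hkl (l' y) (H' y)
  rw [hrel', hHH'] at hK
  rw [hHH'] at hK'
  have horbit : K' + (K + k' y * e + 1) = K + (K' + l' y * e) := hy <| by
    dsimp only
    rw [iterate_add_apply, iterate_succ_apply, ← hK, iter_swap, hK', ← iterate_add_apply]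
  have hprod : (l' y - k' y) * e = 1 := by rw [Nat.sub_mul]; omega
  obtain ⟨hdiff, he⟩ := mul_eq_one.1 hprod
  omega

end OrbitRelation

lemma Matrix.exists_pos_of_mul_apply_pos {l m n : Type*} [Fintype m] {P : Matrix l m ℕ}
    {Q : Matrix m n ℕ} {i : l} {j : n} (h : 0 < (P * Q) i j) : ∃ u, 0 < P i u ∧ 0 < Q u j := by
  rw [Matrix.mul_apply] at h
  obtain ⟨u, -, hu⟩ := Finset.sum_pos_iff.1 h
  exact ⟨u, CanonicallyOrderedAdd.mul_pos.1 hu⟩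

lemma Matrix.exists_two_ones_in_row_of_not_perm {ι : Type*} [Finite ι] [DecidableEq ι]
    {A : Matrix ι ι ℕ}
    (h01 : ∀ i j, A i j = 0 ∨ A i j = 1) (hrow : ∀ i, ∃ j, A i j = 1)
    (hcol : ∀ j, ∃ i, A i j = 1)
    (hperm : ¬ ∃ e : Equiv.Perm ι, ∀ i j, A i j = if e i = j then 1 else 0) :
    ∃ i j j', j ≠ j' ∧ A i j = 1 ∧ A i j' = 1 := by
  by_contra! huniq
  choose f hf using hrow
  have hf_unique : ∀ i j, A i j = 1 → f i = j := fun i j hij =>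
    by_contra fun hne => huniq i _ _ hne (hf i) hij
  have hsurj : Surjective f := fun j => (hcol j).imp fun i => hf_unique i j
  refine hperm ⟨Equiv.ofBijective f ⟨Finite.injective_iff_surjective.2 hsurj, hsurj⟩,
    fun i j => ?_⟩
  show A i j = if f i = j then 1 else 0
  split_ifs with hij
  · exact hij ▸ hf i
  · exact (h01 i j).resolve_right fun h1 => hij (hf_unique i j h1)

namespace IsIrredNonPerm

variable {N : ℕ} {A : Matrix (Fin N) (Fin N) ℕ}

lemma eq_one_of_pos (hA : IsIrredNonPerm A) {i j : Fin N} (h : 0 < A i j) : A i j = 1 :=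
  (hA.zero_one i j).resolve_left h.ne'

lemma exists_eq_one_right (hA : IsIrredNonPerm A) (i : Fin N) : ∃ j, A i j = 1 := by
  obtain ⟨n, hn, hpos⟩ := hA.irreducible i i
  obtain ⟨m, rfl⟩ := Nat.exists_eq_add_of_le' hn
  rw [pow_succ'] at hpos
  obtain ⟨j, hj, -⟩ := Matrix.exists_pos_of_mul_apply_pos hpos
  exact ⟨j, hA.eq_one_of_pos hj⟩

lemma exists_eq_one_left (hA : IsIrredNonPerm A) (j : Fin N) : ∃ i, A i j = 1 := by
  obtain ⟨n, hn, hpos⟩ := hA.irreducible j j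
  obtain ⟨m, rfl⟩ := Nat.exists_eq_add_of_le' hn
  rw [pow_succ] at hpos
  obtain ⟨i, -, hi⟩ := Matrix.exists_pos_of_mul_apply_pos hpos
  exact ⟨i, hA.eq_one_of_pos hi⟩

lemma exists_two_ones_in_row (hA : IsIrredNonPerm A) :
    ∃ i j j', j ≠ j' ∧ A i j = 1 ∧ A i j' = 1 :=
  Matrix.exists_two_ones_in_row_of_not_perm hA.zero_one hA.exists_eq_one_right
    hA.exists_eq_one_left hA.not_perm

lemma exists_two_ones_in_col (hA : IsIrredNonPerm A) :
    ∃ j i i', i ≠ i' ∧ A i j = 1 ∧ A i' j = 1 := by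
  refine Matrix.exists_two_ones_in_row_of_not_perm (A := A.transpose) (fun i j => hA.zero_one j i)
    hA.exists_eq_one_left hA.exists_eq_one_right fun ⟨e, he⟩ => hA.not_perm ⟨e.symm, fun i j => ?_⟩
  exact (he j i).trans (if_congr (eq_comm.trans (Equiv.symm_apply_eq e).symm) rfl rfl)

end IsIrredNonPerm

namespace MarkovShift

variable {N : ℕ} {A : Matrix (Fin N) (Fin N) ℕ}

lemma iterate_shift_apply (m : ℕ) (x : MarkovShift A) (n : ℕ) :
    ((shift A)^[m] x).1 n = x.1 (n + m) := by
  induction m generalizing x with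
  | zero => rfl
  | succ m ih => exact ih (shift A x)

def cons (i : Fin N) (x : MarkovShift A) (hi : A i (x.1 0) = 1) : MarkovShift A :=
  ⟨fun | 0 => i | n + 1 => x.1 n, fun | 0 => hi | n + 1 => x.2 n⟩

@[simp]
lemma shift_cons (i : Fin N) (x : MarkovShift A) (hi : A i (x.1 0) = 1) :
    shift A (cons i x hi) = x :=
  rfl

lemma isClosed : IsClosed (MarkovShift A) := by
  simp only [MarkovShift, Set.ofPred_forall]
  exact isClosed_iInter fun n => isClosed_eq (by fun_prop) continuous_const

instance : CompactSpace (MarkovShift A) :=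
  isCompact_iff_compactSpace.1 isClosed.isCompact

lemma finite_preimage_shift (t : MarkovShift A) : (shift A ⁻¹' {t}).Finite := by
  refine Set.Finite.of_finite_image (f := fun x => x.1 0) (Set.toFinite _) ?_
  intro x hx x' hx' h0
  apply Subtype.ext
  funext n
  cases n with
  | zero => exact h0
  | succ n => exact congrArg (fun z => z.1 n) (hx.trans hx'.symm)

lemma shift_surjective (hA : IsIrredNonPerm A) : Surjective (shift A) := fun x =>
  let ⟨i, hi⟩ := hA.exists_eq_one_left (x.1 0)
  ⟨cons i x hi, rfl⟩

lemma exists_zero_eq (hA : IsIrredNonPerm A) (i : Fin N) : ∃ x : MarkovShift A, x.1 0 = i := by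
  choose f hf using hA.exists_eq_one_right
  exact ⟨⟨fun n => f^[n] i, fun n => by
    show A (f^[n] i) (f^[n + 1] i) = 1
    rw [iterate_succ_apply']
    exact hf _⟩, rfl⟩

lemma not_injective_shift (hA : IsIrredNonPerm A) : ¬ Injective (shift A) := by
  obtain ⟨j, i, i', hne, hi, hi'⟩ := hA.exists_two_ones_in_col
  obtain ⟨x, rfl⟩ := exists_zero_eq hA j
  exact fun hinj => hne (congrArg (fun z => z.1 0) (@hinj (cons i x hi) (cons i' x hi') rfl))

lemma exists_iterate_eq_of_pow_pos (hA : IsIrredNonPerm A) {n : ℕ} {i : Fin N}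
    {x : MarkovShift A} (h : 0 < (A ^ n) i (x.1 0)) :
    ∃ z : MarkovShift A, z.1 0 = i ∧ (shift A)^[n] z = x := by
  induction n generalizing i with
  | zero =>
    rw [pow_zero, Matrix.one_apply] at h
    split_ifs at h with hi
    · exact ⟨x, hi.symm, rfl⟩
    · exact absurd h (lt_irrefl 0)
  | succ n ih =>
    rw [pow_succ'] at h
    obtain ⟨u, hiu, hu⟩ := Matrix.exists_pos_of_mul_apply_pos h
    obtain ⟨z, rfl, hz⟩ := ih hu
    exact ⟨cons i z (hA.eq_one_of_pos hiu), rfl, hz⟩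

lemma exists_prefix_eq_iterate_eq (y x : MarkovShift A) (n : ℕ) (hx : x.1 0 = y.1 n) :
    ∃ w : MarkovShift A, (∀ k ≤ n, w.1 k = y.1 k) ∧ (shift A)^[n] w = x := by
  induction n generalizing y with
  | zero => exact ⟨x, fun k hk => by rw [Nat.le_zero.1 hk]; exact hx, rfl⟩
  | succ n ih =>
    obtain ⟨w, hw, hwx⟩ := ih (shift A y) hx
    refine ⟨cons (y.1 0) w (by rw [hw 0 n.zero_le]; exact y.2 0), fun k hk => ?_, hwx⟩
    cases k with
    | zero => rfl
    | succ k => exact hw k (by omega)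

lemma exists_ne_of_zero_eq (hA : IsIrredNonPerm A) (i : Fin N) :
    ∃ x x' : MarkovShift A, x ≠ x' ∧ x.1 0 = i ∧ x'.1 0 = i := by
  obtain ⟨i₀, j, j', hne, hj, hj'⟩ := hA.exists_two_ones_in_row
  obtain ⟨p, rfl⟩ := exists_zero_eq hA j
  obtain ⟨p', rfl⟩ := exists_zero_eq hA j'
  obtain ⟨n, -, hn⟩ := hA.irreducible i i₀
  obtain ⟨z, hz0, hz⟩ := exists_iterate_eq_of_pow_pos hA (x := cons i₀ p hj) hn
  obtain ⟨z', hz0', hz'⟩ := exists_iterate_eq_of_pow_pos hA (x := cons i₀ p' hj') hn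
  refine ⟨z, z', fun h => hne ?_, hz0, hz0'⟩
  have := congrArg (fun w => ((shift A)^[n] w).1 1) h
  simp only [hz, hz'] at this
  exact this

lemma exists_ne_forall_le_eq (hA : IsIrredNonPerm A) (y : MarkovShift A) (n : ℕ) :
    ∃ w ≠ y, ∀ k ≤ n, w.1 k = y.1 k := by
  obtain ⟨x, x', hne, hx, hx'⟩ := exists_ne_of_zero_eq hA (y.1 n)
  obtain ⟨w, hw, rfl⟩ := exists_prefix_eq_iterate_eq y x n hx
  obtain ⟨w', hw', rfl⟩ := exists_prefix_eq_iterate_eq y x' n hx'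
  by_cases hwy : w = y
  · exact ⟨w', fun h => hne (by rw [hwy, h]), hw'⟩
  · exact ⟨w, hwy, hw⟩

lemma tendsto_of_forall_le_eq {y : MarkovShift A} {w : ℕ → MarkovShift A}
    (hw : ∀ n, ∀ k ≤ n, (w n).1 k = y.1 k) : Tendsto w atTop (𝓝 y) := by
  refine tendsto_subtype_rng.2 (tendsto_pi_nhds.2 fun k => ?_)
  rw [nhds_discrete, tendsto_pure]
  exact eventually_atTop.2 ⟨k, fun n hn => hw n k hn⟩

lemma nhdsNE_neBot (hA : IsIrredNonPerm A) (y : MarkovShift A) : (𝓝[≠] y).NeBot := by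
  choose w hwy hw using exists_ne_forall_le_eq hA y
  exact mem_closure_iff_nhdsWithin_neBot.1
    (mem_closure_of_tendsto (tendsto_of_forall_le_eq hw) (Eventually.of_forall hwy))

lemma eq_of_iterate_eq_iterate {r s : ℕ} (hsr : s < r) {x x' : MarkovShift A}
    (hx : (shift A)^[r] x = (shift A)^[s] x) (hx' : (shift A)^[r] x' = (shift A)^[s] x')
    (h : ∀ k < r, x.1 k = x'.1 k) : x = x' := by
  apply Subtype.ext
  funext k
  induction k using Nat.strong_induction_on with
  | _ k ih =>
    rcases lt_or_ge k r with hk | hk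
    · exact h k hk
    · obtain ⟨m, rfl⟩ := Nat.exists_eq_add_of_le' hk
      have hxm := congrArg (fun z => z.1 m) hx
      have hxm' := congrArg (fun z => z.1 m) hx'
      simp only [iterate_shift_apply] at hxm hxm'
      rw [hxm, hxm']
      exact ih _ (by omega)

lemma countable_setOf_eventuallyPeriodicPt : {x | EventuallyPeriodicPt A x}.Countable := by
  have : {x | EventuallyPeriodicPt A x} =
      ⋃ p : ℕ × ℕ, {x | p.2 < p.1 ∧ (shift A)^[p.1] x = (shift A)^[p.2] x} := by
    ext
    simp [EventuallyPeriodicPt]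
  rw [this]
  refine Set.countable_iUnion fun ⟨r, s⟩ => Set.Finite.countable ?_
  refine Set.Finite.of_finite_image (f := fun x (k : Fin r) => x.1 k) (Set.toFinite _) ?_
  rintro x ⟨hsr, hx⟩ x' ⟨-, hx'⟩ h
  exact eq_of_iterate_eq_iterate hsr hx hx' fun k hk => congrFun h ⟨k, hk⟩

lemma dense_setOf_not_eventuallyPeriodicPt (hA : IsIrredNonPerm A) :
    Dense {x | ¬ EventuallyPeriodicPt A x} := by
  refine (dense_biInter_of_isOpen (S := {x | EventuallyPeriodicPt A x}) (f := fun s => {s}ᶜ)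
    (fun _ _ => isOpen_compl_singleton)
    countable_setOf_eventuallyPeriodicPt fun s _ => ?_).mono fun x hx hep => ?_
  · have := nhdsNE_neBot hA s
    exact dense_compl_singleton s
  · exact Set.mem_iInter₂.1 hx x hep rfl

lemma injective_iterate_of_not_eventuallyPeriodicPt {y : MarkovShift A}
    (hy : ¬ EventuallyPeriodicPt A y) : Injective fun n => (shift A)^[n] y := by
  intro r s hrs
  by_contra hne
  rcases lt_or_gt_of_ne hne with h | h
  · exact hy ⟨s, r, h, hrs.symm⟩
  · exact hy ⟨r, s, h, hrs⟩

end MarkovShift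

namespace COEWitness

open MarkovShift

variable {N M : ℕ} {A : Matrix (Fin N) (Fin N) ℕ} {B : Matrix (Fin M) (Fin M) ℕ}
  {h : MarkovShift A ≃ₜ MarkovShift B} {k₁ l₁ : MarkovShift A → ℕ} {k₂ l₂ : MarkovShift B → ℕ}

lemma symm (hw : COEWitness A B h k₁ l₁ k₂ l₂) : COEWitness B A h.symm k₂ l₂ k₁ l₁ :=
  let ⟨hk₁, hl₁, hk₂, hl₂, hrel₁, hrel₂⟩ := hw
  ⟨hk₂, hl₂, hk₁, hl₁, hrel₂, hrel₁⟩

lemma cocycle_const_pos (hA : IsIrredNonPerm A) (hB : IsIrredNonPerm B)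
    (hw : COEWitness A B h k₁ l₁ k₂ l₂) {C : ℤ} (hC : ∀ x, (l₁ x : ℤ) - k₁ x = C) : 0 < C := by
  obtain ⟨-, hl₁, -, -, hrel₁, -⟩ := hw
  by_contra! hC0
  obtain ⟨D, hD⟩ := (isCompact_range hl₁).bddAbove
  set c := (-C).toNat
  have hrel : ∀ y, (shift B)^[D + c] (h (shift A (h.symm y))) = (shift B)^[D] y := by
    intro y
    have hlD : l₁ (h.symm y) ≤ D := hD (Set.mem_range_self _)
    have hk : k₁ (h.symm y) = l₁ (h.symm y) + c := by have := hC (h.symm y); omega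
    have := congrArg (shift B)^[D - l₁ (h.symm y)] (hrel₁ (h.symm y))
    rw [← iterate_add_apply, ← iterate_add_apply, hk, h.apply_symm_apply] at this
    rwa [Nat.sub_add_cancel hlD, ← add_assoc, Nat.sub_add_cancel hlD] at this
  have hg : Surjective (h ∘ shift A ∘ h.symm) :=
    h.surjective.comp ((shift_surjective hA).comp h.symm.surjective)
  have hinj := injective_of_iterate_add_comp_eq (shift_surjective hB) finite_preimage_shift hg hrel
  exact not_injective_shift hA fun x x' hx => h.injective (hinj (by simp [hx]))

lemma eq_one_of_not_eventuallyPeriodicPt (hw : COEWitness A B h k₁ l₁ k₂ l₂) {e : ℕ}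
    (he : ∀ x, l₁ x = k₁ x + e) {y : MarkovShift B} (hy : ¬ EventuallyPeriodicPt B y) :
    e = 1 ∧ l₂ y = k₂ y + 1 :=
  eq_one_of_orbit_relations hw.2.2.2.2.1 hw.2.2.2.2.2 h.apply_symm_apply he
    (injective_iterate_of_not_eventuallyPeriodicPt hy)

lemma cocycle_eq_one_of_const (hA : IsIrredNonPerm A) (hB : IsIrredNonPerm B)
    (hw : COEWitness A B h k₁ l₁ k₂ l₂) {C : ℤ} (hC : ∀ x, (l₁ x : ℤ) - k₁ x = C) :
    (∀ x, (l₁ x : ℤ) - k₁ x = 1) ∧ (∀ y, (l₂ y : ℤ) - k₂ y = 1) := by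
  have hC0 := hw.cocycle_const_pos hA hB hC
  have he : ∀ x, l₁ x = k₁ x + C.toNat := fun x => by have := hC x; omega
  have hpt : ∀ y, ¬ EventuallyPeriodicPt B y → C = 1 ∧ (l₂ y : ℤ) - k₂ y = 1 := fun y hy => by
    have := hw.eq_one_of_not_eventuallyPeriodicPt he hy
    omega
  have hdense := dense_setOf_not_eventuallyPeriodicPt hB
  obtain ⟨-, -, hk₂, hl₂, -, -⟩ := hw
  have hcont : Continuous fun y => (l₂ y : ℤ) - k₂ y :=
    (continuous_of_discreteTopology.comp hl₂).sub (continuous_of_discreteTopology.comp hk₂)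
  refine ⟨fun x => ?_, fun y => ?_⟩
  · have : Nonempty (MarkovShift B) := ⟨h x⟩
    obtain ⟨y, hy⟩ := hdense.nonempty
    rw [hC x, (hpt y hy).1]
  · exact congrFun (hcont.ext_on hdense continuous_const fun y hy => (hpt y hy).2) y

end COEWitness

/-- if either cocycle function of a continuous orbit equivalence is
constant, then both are identically `1`. -/
theorem cocycle_const_implies_both_one {N M : ℕ}
    (A : Matrix (Fin N) (Fin N) ℕ) (B : Matrix (Fin M) (Fin M) ℕ)
    (hA : IsIrredNonPerm A) (hB : IsIrredNonPerm B)
    (h : ↥(MarkovShift A) ≃ₜ ↥(MarkovShift B))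
    (k₁ l₁ : ↥(MarkovShift A) → ℕ) (k₂ l₂ : ↥(MarkovShift B) → ℕ)
    (hw : COEWitness A B h k₁ l₁ k₂ l₂)
    (hconst : (∃ C₁ : ℤ, ∀ x, (l₁ x : ℤ) - (k₁ x : ℤ) = C₁) ∨
              (∃ C₂ : ℤ, ∀ y, (l₂ y : ℤ) - (k₂ y : ℤ) = C₂)) :
    (∀ x, (l₁ x : ℤ) - (k₁ x : ℤ) = 1) ∧ (∀ y, (l₂ y : ℤ) - (k₂ y : ℤ) = 1) := by
  rcases hconst with ⟨C, hC⟩ | ⟨C, hC⟩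
  · exact hw.cocycle_eq_one_of_const hA hB hC
  · exact (hw.symm.cocycle_eq_one_of_const hB hA hC).symm
end

section
/- Let A and B be irreducible non-permutation {0,1}-matrices, and let (X_A, σ_A) and (X_B, σ_B) be continuously orbit equivalent via a homeomorphism h: X_A → X_B with continuous functions k_1, l_1: X_A → ℤ_{≥0} and k_2, l_2: X_B → ℤ_{≥0}. If the cocycle function c_1 = l_1 − k_1 is a constant function with value C_1, then c_2 = l_2 − k_2 is also a constant function, with value C_2, and C_1 · C_2 = 1. -/
open Function

section OrbitCocycle

variable {α β : Type*} {f : α → α} {g : β → β}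

theorem iterate_birkhoffSum_apply_eq {h : α → β} {k l : α → ℕ}
    (hrel : ∀ x, g^[k x] (h (f x)) = g^[l x] (h x)) (n : ℕ) (x : α) :
    g^[birkhoffSum f k n x] (h (f^[n] x)) = g^[birkhoffSum f l n x] (h x) := by
  induction n with
  | zero => rfl
  | succ n ih =>
    rw [birkhoffSum_succ, birkhoffSum_succ, iterate_succ_apply', iterate_add_apply,
      hrel, iter_swap, ih, ← iterate_add_apply, add_comm]

theorem birkhoffSum_sub_birkhoffSum_of_sub_eq_const {k l : α → ℕ} {C : ℤ}
    (hC : ∀ x, (l x : ℤ) - k x = C) (n : ℕ) (x : α) :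
    ((birkhoffSum f l n x : ℕ) : ℤ) - (birkhoffSum f k n x : ℕ) = n * C := by
  simp [birkhoffSum, ← Finset.sum_sub_distrib, hC]

/-- Both orbit relations transport the `g`-orbit of `y` to an equality `g^[p] y = g^[q] y`
with `q - p = C * (l₂ y - k₂ y) - 1`. -/
theorem mul_cocycle_eq_one_of_injective_orbit (h : α ≃ β) {k₁ l₁ : α → ℕ} {k₂ l₂ : β → ℕ}
    (hrel₁ : ∀ x, g^[k₁ x] (h (f x)) = g^[l₁ x] (h x))
    (hrel₂ : ∀ y, f^[k₂ y] (h.symm (g y)) = f^[l₂ y] (h.symm y))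
    {C : ℤ} (hC : ∀ x, (l₁ x : ℤ) - k₁ x = C) {y : β} (hy : Injective fun n => g^[n] y) :
    C * ((l₂ y : ℤ) - k₂ y) = 1 := by
  set x := h.symm y
  set x' := h.symm (g y)
  have e₁ := iterate_birkhoffSum_apply_eq hrel₁ (k₂ y) x'
  have e₂ := iterate_birkhoffSum_apply_eq hrel₁ (l₂ y) x
  rw [hrel₂, Equiv.apply_symm_apply] at e₁
  rw [Equiv.apply_symm_apply] at e₂
  set a := birkhoffSum f k₁ (k₂ y) x'
  set b := birkhoffSum f l₁ (k₂ y) x'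
  set a' := birkhoffSum f k₁ (l₂ y) x
  set b' := birkhoffSum f l₁ (l₂ y) x
  have horbit : g^[a' + (b + 1)] y = g^[a + b'] y := by
    rw [iterate_add_apply, iterate_succ_apply, ← e₁, iter_swap, e₂, ← iterate_add_apply]
  have hsum : (a' : ℤ) + (b + 1) = a + b' := by exact_mod_cast hy horbit
  have d₁ := birkhoffSum_sub_birkhoffSum_of_sub_eq_const (f := f) hC (k₂ y) x'
  have d₂ := birkhoffSum_sub_birkhoffSum_of_sub_eq_const (f := f) hC (l₂ y) x
  linear_combination d₁ - d₂ - hsum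

theorem exists_cocycle_eq_const_of_dense_injective_orbits [TopologicalSpace β] [Nonempty β]
    (h : α ≃ β) {k₁ l₁ : α → ℕ} {k₂ l₂ : β → ℕ} (hk₂ : Continuous k₂) (hl₂ : Continuous l₂)
    (hrel₁ : ∀ x, g^[k₁ x] (h (f x)) = g^[l₁ x] (h x))
    (hrel₂ : ∀ y, f^[k₂ y] (h.symm (g y)) = f^[l₂ y] (h.symm y))
    (hdense : Dense {y | Injective fun n => g^[n] y})
    {C₁ : ℤ} (hC₁ : ∀ x, (l₁ x : ℤ) - k₁ x = C₁) :
    ∃ C₂ : ℤ, (∀ y, (l₂ y : ℤ) - k₂ y = C₂) ∧ C₁ * C₂ = 1 := by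
  have hcont : Continuous fun y => C₁ * ((l₂ y : ℤ) - k₂ y) :=
    continuous_const.mul ((continuous_of_discreteTopology.comp hl₂).sub
      (continuous_of_discreteTopology.comp hk₂))
  have hone : ∀ y, C₁ * ((l₂ y : ℤ) - k₂ y) = 1 := congrFun <|
    Continuous.ext_on hdense hcont continuous_const fun y hy =>
      mul_cocycle_eq_one_of_injective_orbit h hrel₁ hrel₂ hC₁ hy
  obtain ⟨y₀⟩ := ‹Nonempty β›
  exact ⟨_, fun y => mul_left_cancel₀ (left_ne_zero_of_mul_eq_one (hone y₀))
    ((hone y).trans (hone y₀).symm), hone y₀⟩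

end OrbitCocycle

section Paths

variable {ι : Type*}

def IsPath (B : Matrix ι ι ℕ) (p : ℕ → ι) (n : ℕ) : Prop :=
  ∀ i < n, B (p i) (p (i + 1)) = 1

def IsLoop (B : Matrix ι ι ℕ) (v : ι) (p : ℕ → ι) (n : ℕ) : Prop :=
  IsPath B p n ∧ p 0 = v ∧ p n = v

def splice (p q : ℕ → ι) (T : ℕ) : ℕ → ι :=
  fun i => if i < T then p i else q (i - T)

def concatBlocks (L : ℕ) (w : ℕ → ℕ → ι) : ℕ → ι :=
  fun n => w (n / L) (n % L)

theorem splice_of_lt {p q : ℕ → ι} {T i : ℕ} (hi : i < T) : splice p q T i = p i := if_pos hi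

theorem splice_add (p q : ℕ → ι) (T i : ℕ) : splice p q T (T + i) = q i := by
  simp [splice]

theorem splice_injective (p : ℕ → ι) (T : ℕ) : Injective fun q => splice p q T :=
  fun q q' hqq' => funext fun i => by
    simpa only [splice_add] using congrFun hqq' (T + i)

theorem splice_of_le {p q : ℕ → ι} {T i : ℕ} (hpq : p T = q 0) (hi : i ≤ T) :
    splice p q T i = p i := by
  rcases hi.lt_or_eq with hi | rfl
  · exact splice_of_lt hi
  · simpa [hpq] using splice_add p q i 0

theorem concatBlocks_mul_add {L r : ℕ} (w : ℕ → ℕ → ι) (hr : r < L) (j : ℕ) :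
    concatBlocks L w (L * j + r) = w j r := by
  simp [concatBlocks, Nat.mul_add_div (Nat.zero_lt_of_lt hr), Nat.div_eq_of_lt hr,
    Nat.mod_eq_of_lt hr]

variable {B : Matrix ι ι ℕ}

theorem IsPath.cons {p : ℕ → ι} {n : ℕ} (hp : IsPath B p n) {u : ι} (hu : B u (p 0) = 1) :
    IsPath B (splice (fun _ => u) p 1) (1 + n) := by
  rintro (_ | i) hi
  · simpa [splice] using hu
  · simpa [splice] using hp i (by omega)

theorem IsPath.splice {p q : ℕ → ι} {T m : ℕ} (hp : IsPath B p T) (hq : IsPath B q m)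
    (hpq : p T = q 0) : IsPath B (splice p q T) (T + m) := by
  intro i hi
  rcases lt_or_ge i T with hiT | hiT
  · rw [splice_of_le hpq hiT.le, splice_of_le hpq hiT]
    exact hp i hiT
  · obtain ⟨j, rfl⟩ := Nat.exists_eq_add_of_le hiT
    rw [add_assoc, splice_add, splice_add]
    exact hq j (by omega)

theorem IsLoop.splice {v : ι} {p q : ℕ → ι} {m n : ℕ} (hp : IsLoop B v p m)
    (hq : IsLoop B v q n) : IsLoop B v (splice p q m) (m + n) := by
  have hpq : p m = q 0 := hp.2.2.trans hq.2.1.symm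
  exact ⟨hp.1.splice hq.1 hpq, (splice_of_le hpq m.zero_le).trans hp.2.1,
    (splice_add p q m n).trans hq.2.2⟩

theorem exists_isPath_of_pow_pos [Fintype ι] [DecidableEq ι]
    (hB : ∀ i j, B i j = 0 ∨ B i j = 1) {n : ℕ} {u w : ι} (h : 0 < (B ^ n) u w) :
    ∃ p : ℕ → ι, IsPath B p n ∧ p 0 = u ∧ p n = w := by
  induction n generalizing w with
  | zero =>
    obtain rfl : u = w := by
      by_contra hne
      simp [hne] at h
    exact ⟨fun _ => u, fun i hi => absurd hi (Nat.not_lt_zero i), rfl, rfl⟩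
  | succ n ih =>
    rw [pow_succ, Matrix.mul_apply, Finset.sum_pos_iff] at h
    obtain ⟨t, -, ht⟩ := h
    obtain ⟨hut, htw⟩ := CanonicallyOrderedAdd.mul_pos.mp ht
    obtain ⟨p, hp, hp0, hpn⟩ := ih hut
    refine ⟨Function.update p (n + 1) w, fun i hi => ?_, by simpa using hp0, by simp⟩
    rcases (Nat.lt_succ_iff.mp hi).lt_or_eq with hi | rfl
    · simpa [Function.update_of_ne (show i ≠ n + 1 by omega),
        Function.update_of_ne (show i + 1 ≠ n + 1 by omega)] using hp i hi
    · simpa [hpn] using (hB t w).resolve_left htw.ne'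

end Paths

theorem exists_cylinder_subset_of_isOpen {E : ℕ → Type*} [∀ n, TopologicalSpace (E n)]
    [∀ n, DiscreteTopology (E n)] {S : Set (∀ n, E n)} {U : Set S} (hU : IsOpen U) {y : S}
    (hy : y ∈ U) : ∃ n, ∀ z : S, z.1 ∈ PiNat.cylinder y.1 n → z ∈ U := by
  obtain ⟨V, hV, rfl⟩ := isOpen_induced_iff.1 hU
  obtain ⟨_, ⟨x, n, rfl⟩, hyx, hxV⟩ :=
    (PiNat.isTopologicalBasis_cylinders E).exists_subset_of_mem_open hy hV
  exact ⟨n, fun z hz => hxV (PiNat.mem_cylinder_iff_eq.1 hyx ▸ hz)⟩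

section MarkovShift

variable {M : ℕ} {B : Matrix (Fin M) (Fin M) ℕ}

theorem mem_markovShift_iff {x : ℕ → Fin M} : x ∈ MarkovShift B ↔ ∀ n, IsPath B x n :=
  ⟨fun hx _ i _ => hx i, fun hx i => hx (i + 1) i i.lt_succ_self⟩

theorem splice_mem_markovShift {p q : ℕ → Fin M} {T : ℕ} (hp : IsPath B p T)
    (hq : q ∈ MarkovShift B) (hpq : p T = q 0) : splice p q T ∈ MarkovShift B :=
  fun i => hp.splice (mem_markovShift_iff.1 hq (i + 1)) hpq i (by omega)

theorem concatBlocks_mem_markovShift {v : Fin M} {L : ℕ} (hL : 0 < L) {w : ℕ → ℕ → Fin M}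
    (hw : ∀ j, IsLoop B v (w j) L) : concatBlocks L w ∈ MarkovShift B := by
  intro n
  obtain ⟨j, r, hr, rfl⟩ : ∃ j r, r < L ∧ n = L * j + r :=
    ⟨n / L, n % L, Nat.mod_lt n hL, (Nat.div_add_mod n L).symm⟩
  rw [concatBlocks_mul_add w hr]
  rcases (Nat.succ_le_of_lt hr).lt_or_eq with hr' | hr'
  · rw [add_assoc, concatBlocks_mul_add w hr']
    exact (hw j).1 r hr
  · rw [show L * j + r + 1 = L * (j + 1) + 0 by rw [mul_add]; omega,
      concatBlocks_mul_add w hL, (hw (j + 1)).2.1, ← (hw j).2.2, ← hr']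
    exact (hw j).1 r hr

theorem shift_iterate_apply (x : MarkovShift B) (k i : ℕ) :
    ((shift B)^[k] x).1 i = x.1 (i + k) := by
  induction k generalizing x with
  | zero => rfl
  | succ k ih => exact (ih (shift B x)).trans (congrArg x.1 (by omega))

theorem injective_iterate_shift_of_not_eventuallyPeriodicPt {y : MarkovShift B}
    (hy : ¬ EventuallyPeriodicPt B y) : Injective fun n => (shift B)^[n] y := by
  intro p q hpq
  by_contra hne
  rcases Nat.lt_or_gt_of_ne hne with h | h
  exacts [hy ⟨q, p, h, hpq.symm⟩, hy ⟨p, q, h, hpq⟩]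

/-- An eventually periodic point is determined by its period data and a finite prefix. -/
theorem countable_setOf_eventuallyPeriodicPt :
    {x : MarkovShift B | EventuallyPeriodicPt B x}.Countable := by
  have hcover : {x : MarkovShift B | EventuallyPeriodicPt B x} ⊆
      ⋃ rs : ℕ × ℕ, {x | rs.2 < rs.1 ∧ (shift B)^[rs.1] x = (shift B)^[rs.2] x} :=
    fun x ⟨r, s, hsr, hx⟩ => Set.mem_iUnion.2 ⟨(r, s), hsr, hx⟩
  refine (Set.countable_iUnion fun ⟨r, s⟩ => ?_).mono hcover
  refine (Set.mapsTo_univ (fun x : MarkovShift B => fun i : Fin r => x.1 i) _).countable_of_injOn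
    ?_ Set.countable_univ
  rintro x ⟨hsr, hx⟩ y ⟨-, hy⟩ hxy
  refine Subtype.ext (funext fun m => ?_)
  induction m using Nat.strong_induction_on with
  | _ m ih =>
    rcases lt_or_ge m r with hm | hm
    · exact congrFun hxy ⟨m, hm⟩
    · obtain ⟨i, rfl⟩ := Nat.exists_eq_add_of_le' hm
      have hx' := congrArg (fun z : MarkovShift B => z.1 i) hx
      have hy' := congrArg (fun z : MarkovShift B => z.1 i) hy
      simp only [shift_iterate_apply] at hx' hy'
      rw [hx', hy', ih (i + s) (by omega)]

theorem exists_not_eventuallyPeriodicPt_of_injective {G : (ℕ → Bool) → MarkovShift B}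
    (hG : Injective G) : ∃ s, ¬ EventuallyPeriodicPt B (G s) := by
  have : Uncountable (ℕ → Bool) := by
    rw [← Cardinal.aleph0_lt_mk_iff]
    simpa using Cardinal.cantor Cardinal.aleph0
  by_contra! h
  exact Set.not_countable_univ
    ((countable_setOf_eventuallyPeriodicPt.preimage hG).mono fun s _ => h s)

end MarkovShift

namespace IsIrredNonPerm

variable {M : ℕ} {B : Matrix (Fin M) (Fin M) ℕ}

theorem exists_isPath (hB : IsIrredNonPerm B) (u w : Fin M) :
    ∃ n p, 0 < n ∧ IsPath B p n ∧ p 0 = u ∧ p n = w := by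
  obtain ⟨n, hn, hpos⟩ := hB.irreducible u w
  obtain ⟨p, hp⟩ := exists_isPath_of_pow_pos hB.zero_one hpos
  exact ⟨n, p, hn, hp⟩

/-- Without a vertex of out-degree two, the unique successor map would be a permutation. -/
theorem exists_branch (hB : IsIrredNonPerm B) :
    ∃ v a b : Fin M, a ≠ b ∧ B v a = 1 ∧ B v b = 1 := by
  by_contra! hno
  have hunique : ∀ v a b, B v a = 1 → B v b = 1 → a = b := fun v a b ha hb =>
    by_contra fun hab => hno v a b hab ha hb
  have hsucc : ∀ u, ∃ w, B u w = 1 := fun u => by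
    obtain ⟨n, p, hn, hp, hp0, -⟩ := hB.exists_isPath u u
    exact ⟨p 1, hp0 ▸ hp 0 hn⟩
  have hpred : ∀ w, ∃ u, B u w = 1 := fun w => by
    obtain ⟨n, p, hn, hp, -, hpn⟩ := hB.exists_isPath w w
    exact ⟨p (n - 1), by simpa [Nat.sub_add_cancel hn, hpn] using hp (n - 1) (by omega)⟩
  choose e he using hsucc
  have hsurj : Surjective e := fun w =>
    let ⟨u, hu⟩ := hpred w
    ⟨u, hunique u _ _ (he u) hu⟩
  refine hB.not_perm ⟨Equiv.ofBijective e ⟨Finite.injective_iff_surjective.2 hsurj, hsurj⟩,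
    fun i j => ?_⟩
  show B i j = if e i = j then 1 else 0
  split_ifs with hij
  · exact hij ▸ he i
  · exact (hB.zero_one i j).resolve_right fun h => hij (hunique i _ _ (he i) h)

theorem exists_isLoop_of_adj (hB : IsIrredNonPerm B) {v c : Fin M} (hc : B v c = 1) :
    ∃ n p, 1 < n ∧ IsLoop B v p n ∧ p 1 = c := by
  obtain ⟨n, p, hn, hp, hp0, hpn⟩ := hB.exists_isPath c v
  refine ⟨1 + n, splice (fun _ => v) p 1, by omega,
    ⟨hp.cons (hp0 ▸ hc), splice_of_lt one_pos, (splice_add _ p 1 n).trans hpn⟩,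
    (splice_add _ p 1 0).trans hp0⟩

/-- The loops `v → a ⇝ v → b ⇝ v` and `v → b ⇝ v → a ⇝ v` have the same length. -/
theorem exists_isLoop_pair (hB : IsIrredNonPerm B) :
    ∃ v L w₀ w₁, 1 < L ∧ IsLoop B v w₀ L ∧ IsLoop B v w₁ L ∧ w₀ 1 ≠ w₁ 1 := by
  obtain ⟨v, a, b, hab, ha, hb⟩ := hB.exists_branch
  obtain ⟨m, p, hm, hp, hpa⟩ := hB.exists_isLoop_of_adj ha
  obtain ⟨n, q, hn, hq, hqb⟩ := hB.exists_isLoop_of_adj hb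
  refine ⟨v, m + n, splice p q m, splice q p n, by omega, hp.splice hq,
    add_comm n m ▸ hq.splice hp, ?_⟩
  rwa [splice_of_lt hm, splice_of_lt hn, hpa, hqb]

theorem exists_injective_markovShift (hB : IsIrredNonPerm B) :
    ∃ v, ∃ G : (ℕ → Bool) → MarkovShift B, Injective G ∧ ∀ s, (G s).1 0 = v := by
  obtain ⟨v, L, w₀, w₁, hL, h₀, h₁, hne⟩ := hB.exists_isLoop_pair
  have hL0 : 0 < L := by omega
  let w (s : ℕ → Bool) (j : ℕ) : ℕ → Fin M := if s j then w₁ else w₀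
  have hw : ∀ s j, IsLoop B v (w s j) L := fun s j => by
    by_cases hs : s j <;> simp [w, hs, h₀, h₁]
  refine ⟨v, fun s => ⟨concatBlocks L (w s), concatBlocks_mem_markovShift hL0 (hw s)⟩,
    fun s s' hss' => funext fun j => ?_, fun s => ?_⟩
  · have hj := congrFun (congrArg Subtype.val hss') (L * j + 1)
    simp only [concatBlocks_mul_add _ hL] at hj
    cases hs : s j <;> cases hs' : s' j <;> simp_all [w, hne.symm]
  · simpa using (concatBlocks_mul_add (w s) hL0 0).trans (hw s 0).2.1

theorem nonempty_markovShift (hB : IsIrredNonPerm B) : Nonempty (MarkovShift B) :=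
  let ⟨_, G, _⟩ := hB.exists_injective_markovShift
  ⟨G fun _ => false⟩

theorem exists_injective_cylinder (hB : IsIrredNonPerm B) (y : MarkovShift B) (n : ℕ) :
    ∃ G : (ℕ → Bool) → MarkovShift B, Injective G ∧ ∀ s, (G s).1 ∈ PiNat.cylinder y.1 n := by
  obtain ⟨v, G, hG, hG0⟩ := hB.exists_injective_markovShift
  obtain ⟨m, p, -, hp, hp0, hpm⟩ := hB.exists_isPath (y.1 n) v
  have hjoin : ∀ s, p m = (G s).1 0 := fun s => hpm.trans (hG0 s).symm
  refine ⟨fun s => ⟨splice y.1 (splice p (G s).1 m) n,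
      splice_mem_markovShift (mem_markovShift_iff.1 y.2 n)
        (splice_mem_markovShift hp (G s).2 (hjoin s))
        (hp0.symm.trans (splice_of_le (hjoin s) m.zero_le).symm)⟩,
    fun s s' hss' => hG (Subtype.ext ?_), fun s => PiNat.mem_cylinder_iff.2 fun i hi => ?_⟩
  · exact splice_injective p m (splice_injective y.1 n (congrArg Subtype.val hss'))
  · exact splice_of_lt hi

theorem dense_setOf_not_eventuallyPeriodicPt (hB : IsIrredNonPerm B) :
    Dense {y : MarkovShift B | ¬ EventuallyPeriodicPt B y} := by
  refine dense_iff_inter_open.2 fun U hU ⟨y, hy⟩ => ?_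
  obtain ⟨n, hn⟩ := exists_cylinder_subset_of_isOpen hU hy
  obtain ⟨G, hG, hGy⟩ := hB.exists_injective_cylinder y n
  obtain ⟨s, hs⟩ := exists_not_eventuallyPeriodicPt_of_injective hG
  exact ⟨G s, hn _ (hGy s), hs⟩

end IsIrredNonPerm

theorem cocycle_const_implies_other_const_general {N M : ℕ}
    (A : Matrix (Fin N) (Fin N) ℕ) (B : Matrix (Fin M) (Fin M) ℕ)
    (hB : IsIrredNonPerm B)
    (h : ↥(MarkovShift A) ≃ₜ ↥(MarkovShift B))
    (k₁ l₁ : ↥(MarkovShift A) → ℕ) (k₂ l₂ : ↥(MarkovShift B) → ℕ)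
    (hw : COEWitness A B h k₁ l₁ k₂ l₂)
    (C₁ : ℤ) (hC₁ : ∀ x, (l₁ x : ℤ) - (k₁ x : ℤ) = C₁) :
    ∃ C₂ : ℤ, (∀ y, (l₂ y : ℤ) - (k₂ y : ℤ) = C₂) ∧ C₁ * C₂ = 1 := by
  obtain ⟨-, -, hk₂, hl₂, hrel₁, hrel₂⟩ := hw
  have := hB.nonempty_markovShift
  exact exists_cocycle_eq_const_of_dense_injective_orbits h.toEquiv hk₂ hl₂ hrel₁ hrel₂
    (hB.dense_setOf_not_eventuallyPeriodicPt.mono fun _ =>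
      injective_iterate_shift_of_not_eventuallyPeriodicPt) hC₁

/-- if the cocycle function `c₁ = l₁ - k₁` is constant with value
`C₁`, then `c₂ = l₂ - k₂` is also constant, with value `C₂`, and `C₁ · C₂ = 1`. -/
theorem cocycle_const_implies_other_const {N M : ℕ}
    (A : Matrix (Fin N) (Fin N) ℕ) (B : Matrix (Fin M) (Fin M) ℕ)
    (hA : IsIrredNonPerm A) (hB : IsIrredNonPerm B)
    (h : ↥(MarkovShift A) ≃ₜ ↥(MarkovShift B))
    (k₁ l₁ : ↥(MarkovShift A) → ℕ) (k₂ l₂ : ↥(MarkovShift B) → ℕ)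
    (hw : COEWitness A B h k₁ l₁ k₂ l₂)
    (C₁ : ℤ) (hC₁ : ∀ x, (l₁ x : ℤ) - (k₁ x : ℤ) = C₁) :
    ∃ C₂ : ℤ, (∀ y, (l₂ y : ℤ) - (k₂ y : ℤ) = C₂) ∧ C₁ * C₂ = 1 :=
  cocycle_const_implies_other_const_general A B hB h k₁ l₁ k₂ l₂ hw C₁ hC₁
end

section
/- Let A and B be irreducible non-permutation {0,1}-matrices, and let h: X_A → X_B be a homeomorphism giving rise to a continuous orbit equivalence between (X_A, σ_A) and (X_B, σ_B). Then for every x ∈ X_A, x is eventually periodic in (X_A, σ_A) if and only if h(x) is eventually periodic in (X_B, σ_B). -/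
section Aux
variable {N : ℕ} {A : Matrix (Fin N) (Fin N) ℕ}

private lemma shift_iterate_apply_s11 (K : ℕ) (y : ↥(MarkovShift A)) (m : ℕ) :
    (((shift A)^[K]) y).1 m = y.1 (m + K) := by
  induction K generalizing y with
  | zero => rfl
  | succ K ih =>
    rw [Function.iterate_succ_apply, ih (shift A y)]
    show y.1 (m + K + 1) = y.1 (m + (K + 1))
    congr 1

private lemma shift_continuous : Continuous (shift A) := by
  apply Continuous.subtype_mk
  exact continuous_pi fun n => (continuous_apply (n + 1)).comp continuous_subtype_val

private lemma shift_iterate_continuous (n : ℕ) : Continuous ((shift A)^[n]) := by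
  induction n with
  | zero => exact continuous_id
  | succ n ih => rw [Function.iterate_succ]; exact ih.comp shift_continuous

private lemma ep_shift {x : ↥(MarkovShift A)} (k : ℕ) (h : EventuallyPeriodicPt A x) :
    EventuallyPeriodicPt A ((shift A)^[k] x) := by
  obtain ⟨r, s, hrs, heq⟩ := h
  exact ⟨r, s, hrs, by rw [iter_swap, heq, iter_swap]⟩

private lemma ep_of_shift {x : ↥(MarkovShift A)} (k : ℕ)
    (h : EventuallyPeriodicPt A ((shift A)^[k] x)) : EventuallyPeriodicPt A x := by
  obtain ⟨r, s, hrs, heq⟩ := h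
  exact ⟨r + k, s + k, by omega, by
    rw [Function.iterate_add_apply, Function.iterate_add_apply]; exact heq⟩

end Aux

section Cocycle
variable {N M : ℕ} {A : Matrix (Fin N) (Fin N) ℕ} {B : Matrix (Fin M) (Fin M) ℕ}

private lemma cocycle_rel (h : ↥(MarkovShift A) ≃ₜ ↥(MarkovShift B))
    (k₁ l₁ : ↥(MarkovShift A) → ℕ)
    (hrel : ∀ z, (shift B)^[k₁ z] (h (shift A z)) = (shift B)^[l₁ z] (h z)) :
    ∀ (n : ℕ) (z : ↥(MarkovShift A)),
      (shift B)^[cocycleSum A k₁ n z] (h ((shift A)^[n] z)) =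
      (shift B)^[cocycleSum A l₁ n z] (h z) := by
  intro n
  induction n with
  | zero => intro z; simp [cocycleSum]
  | succ n ih =>
    intro z
    have hK : cocycleSum A k₁ (n + 1) z = cocycleSum A k₁ n z + k₁ ((shift A)^[n] z) :=
      Finset.sum_range_succ _ _
    have hL : cocycleSum A l₁ (n + 1) z = cocycleSum A l₁ n z + l₁ ((shift A)^[n] z) :=
      Finset.sum_range_succ _ _
    rw [hK, hL, Function.iterate_succ_apply' (shift A) n z,
      Function.iterate_add_apply, hrel ((shift A)^[n] z), iter_swap, ih z,
      iter_swap, ← Function.iterate_add_apply, add_comm]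

private lemma cocycleSum_continuous {k₁ : ↥(MarkovShift A) → ℕ} (hk : Continuous k₁)
    (p : ℕ) : Continuous (cocycleSum A k₁ p) := by
  unfold cocycleSum
  exact continuous_finset_sum _ fun i _ => hk.comp (shift_iterate_continuous i)

end Cocycle
section Comb
variable {N : ℕ} {A : Matrix (Fin N) (Fin N) ℕ}

private lemma path_of_pow (hA : IsIrredNonPerm A) :
    ∀ (n : ℕ) (i j : Fin N), (A ^ n) i j ≠ 0 →
      ∃ c : ℕ → Fin N, c 0 = i ∧ c n = j ∧ ∀ t, t < n → A (c t) (c (t + 1)) = 1 := by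
  intro n
  induction n with
  | zero =>
    intro i j hp
    have hij : i = j := by
      by_contra hne
      rw [pow_zero, Matrix.one_apply_ne hne] at hp
      exact hp rfl
    exact ⟨fun _ => i, rfl, hij ▸ rfl, fun t ht => absurd ht (Nat.not_lt_zero t)⟩
  | succ n ih =>
    intro i j hp
    rw [pow_succ, Matrix.mul_apply] at hp
    obtain ⟨k, -, hk⟩ := Finset.exists_ne_zero_of_sum_ne_zero hp
    have h1 : (A ^ n) i k ≠ 0 := fun h => hk (by rw [h, zero_mul])
    have h2 : A k j = 1 := by
      rcases hA.zero_one k j with h | h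
      · exact absurd (by rw [h, mul_zero]) hk
      · exact h
    obtain ⟨c, hc0, hcn, hstep⟩ := ih i k h1
    refine ⟨fun t => if t ≤ n then c t else j, by simp [hc0], by simp, fun t ht => ?_⟩
    show A (if t ≤ n then c t else j) (if t + 1 ≤ n then c (t + 1) else j) = 1
    rcases Nat.lt_or_ge t n with h | h
    · rw [if_pos (Nat.le_of_lt h), if_pos (Nat.succ_le_of_lt h)]
      exact hstep t h
    · have ht' : t = n := by omega
      rw [ht', if_pos (le_refl n), if_neg (show ¬ n + 1 ≤ n by omega), hcn]
      exact h2

private lemma exists_path (hA : IsIrredNonPerm A) (i j : Fin N) :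
    ∃ n, 1 ≤ n ∧ ∃ c : ℕ → Fin N, c 0 = i ∧ c n = j ∧ ∀ t, t < n → A (c t) (c (t + 1)) = 1 := by
  obtain ⟨n, hn1, hpos⟩ := hA.irreducible i j
  exact ⟨n, hn1, path_of_pow hA n i j (Nat.pos_iff_ne_zero.mp hpos)⟩

private lemma exists_row_one (hA : IsIrredNonPerm A) (i : Fin N) : ∃ j, A i j = 1 := by
  obtain ⟨n, hn1, hpos⟩ := hA.irreducible i i
  obtain ⟨m, rfl⟩ : ∃ m, n = m + 1 := ⟨n - 1, by omega⟩
  rw [pow_succ', Matrix.mul_apply] at hpos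
  obtain ⟨k, -, hk⟩ := Finset.exists_ne_zero_of_sum_ne_zero (Nat.pos_iff_ne_zero.mp hpos)
  have h1 : A i k ≠ 0 := fun h => hk (by rw [h, zero_mul])
  exact ⟨k, (hA.zero_one i k).resolve_left h1⟩

private lemma exists_col_one (hA : IsIrredNonPerm A) (j : Fin N) : ∃ i, A i j = 1 := by
  obtain ⟨n, hn1, hpos⟩ := hA.irreducible j j
  obtain ⟨m, rfl⟩ : ∃ m, n = m + 1 := ⟨n - 1, by omega⟩
  rw [pow_succ, Matrix.mul_apply] at hpos
  obtain ⟨k, -, hk⟩ := Finset.exists_ne_zero_of_sum_ne_zero (Nat.pos_iff_ne_zero.mp hpos)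
  have h1 : A k j ≠ 0 := fun h => hk (by rw [h, mul_zero])
  exact ⟨k, (hA.zero_one k j).resolve_left h1⟩

private lemma exists_branch (hA : IsIrredNonPerm A) :
    ∃ i₀ j₁ j₂ : Fin N, j₁ ≠ j₂ ∧ A i₀ j₁ = 1 ∧ A i₀ j₂ = 1 := by
  by_contra hcon
  push_neg at hcon
  have huniq : ∀ i j₁ j₂, A i j₁ = 1 → A i j₂ = 1 → j₁ = j₂ := by
    intro i j₁ j₂ h1 h2
    by_contra hne
    exact (hcon i j₁ j₂ hne h1) h2
  choose e he using fun i => exists_row_one hA i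
  have hsurj : Function.Surjective e := by
    intro j
    obtain ⟨i, hi⟩ := exists_col_one hA j
    exact ⟨i, (huniq i (e i) j (he i) hi).symm ▸ rfl⟩
  have hbij : Function.Bijective e :=
    ⟨Finite.injective_iff_surjective.mpr hsurj, hsurj⟩
  refine hA.not_perm ⟨Equiv.ofBijective e hbij, fun i j => ?_⟩
  by_cases hij : e i = j
  · simp only [Equiv.ofBijective_apply, hij, if_pos]
    rw [← hij]; exact he i
  · simp only [Equiv.ofBijective_apply, hij, if_neg]
    rcases hA.zero_one i j with h | h
    · exact h
    · exact absurd (huniq i (e i) j (he i) h) hij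

end Comb

/-- The indicator of squares: an aperiodic boolean sequence. -/
private def bseq (q : ℕ) : Bool := decide (Nat.sqrt q * Nat.sqrt q = q)

private lemma bseq_sq (k : ℕ) : bseq (k * k) = true := by
  simp [bseq, Nat.sqrt_eq]

private lemma bseq_aperiodic (d : ℕ) (hd : 1 ≤ d) (s : ℕ) :
    ∃ q, s ≤ q ∧ bseq (q + d) ≠ bseq q := by
  set k := s + d + 1 with hk
  refine ⟨k * k, ?_, ?_⟩
  · have h := Nat.le_mul_of_pos_left k (show 0 < k by omega)
    omega
  rw [bseq_sq]
  intro hcontra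
  have hsq : Nat.sqrt (k * k + d) * Nat.sqrt (k * k + d) = k * k + d := by
    simpa [bseq] using hcontra
  set m := Nat.sqrt (k * k + d) with hm
  have h2 : k < m := by
    by_contra hle
    push_neg at hle
    have := Nat.mul_le_mul hle hle
    omega
  have h5 : (k + 1) * (k + 1) ≤ m * m := Nat.mul_le_mul h2 h2
  have h6 : (k + 1) * (k + 1) = k * k + 2 * k + 1 := by ring
  omega
section Words
variable {N : ℕ} {A : Matrix (Fin N) (Fin N) ℕ}

private def catF {α : Type*} (f g : ℕ → α) (ℓ : ℕ) : ℕ → α :=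
  fun t => if t < ℓ then f t else g (t - ℓ)

private lemma catF_lt {α : Type*} {f g : ℕ → α} {ℓ t : ℕ} (h : t < ℓ) :
    catF f g ℓ t = f t := if_pos h

private lemma catF_ge {α : Type*} {f g : ℕ → α} {ℓ t : ℕ} (h : ℓ ≤ t) :
    catF f g ℓ t = g (t - ℓ) := if_neg (by omega)

private lemma catF_add {α : Type*} (f g : ℕ → α) (ℓ s : ℕ) :
    catF f g ℓ (ℓ + s) = g s := by
  rw [catF_ge (by omega)]
  congr 1
  omega

private lemma catF_adm {f g : ℕ → Fin N} {ℓ m : ℕ} (hℓ : 1 ≤ ℓ)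
    (hf : ∀ t, t + 1 < ℓ → A (f t) (f (t + 1)) = 1)
    (hb : A (f (ℓ - 1)) (g 0) = 1)
    (hg : ∀ t, t + 1 ≤ m → A (g t) (g (t + 1)) = 1) :
    ∀ t, t + 1 ≤ ℓ + m → A (catF f g ℓ t) (catF f g ℓ (t + 1)) = 1 := by
  intro t ht
  rcases Nat.lt_or_ge (t + 1) ℓ with h | h
  · rw [catF_lt (by omega), catF_lt h]
    exact hf t h
  · rcases Nat.lt_or_ge t ℓ with h2 | h2
    · rw [catF_lt h2, catF_ge h, show t = ℓ - 1 by omega, show ℓ - 1 + 1 - ℓ = 0 by omega]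
      exact hb
    · rw [catF_ge h2, catF_ge (by omega), show t + 1 - ℓ = (t - ℓ) + 1 by omega]
      exact hg (t - ℓ) (by omega)

private lemma exists_tail (hA : IsIrredNonPerm A) :
    ∃ (i₀ : Fin N) (tail : ℕ → Fin N), tail 0 = i₀ ∧
      (∀ t, A (tail t) (tail (t + 1)) = 1) ∧
      (∀ d, 1 ≤ d → ∀ s, ¬ (∀ v, s ≤ v → tail (v + d) = tail v)) := by
  obtain ⟨i₀, j₁, j₂, hjne, hj1, hj2⟩ := exists_branch hA
  obtain ⟨n₁, hn₁, c₁, hc₁0, hc₁n, hc₁step⟩ := exists_path hA j₁ i₀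
  obtain ⟨n₂, hn₂, c₂, hc₂0, hc₂n, hc₂step⟩ := exists_path hA j₂ i₀
  set w₁ : ℕ → Fin N := catF (fun _ => i₀) c₁ 1 with hw₁def
  set w₂ : ℕ → Fin N := catF (fun _ => i₀) c₂ 1 with hw₂def
  set ℓ₁ := 1 + n₁ with hℓ₁
  set ℓ₂ := 1 + n₂ with hℓ₂
  have hw₁0 : w₁ 0 = i₀ := catF_lt one_pos
  have hw₂0 : w₂ 0 = i₀ := catF_lt one_pos
  have hw₁1 : w₁ 1 = j₁ := by rw [hw₁def, catF_ge (le_refl 1), Nat.sub_self, hc₁0]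
  have hw₂1 : w₂ 1 = j₂ := by rw [hw₂def, catF_ge (le_refl 1), Nat.sub_self, hc₂0]
  have hw₁ℓ : w₁ ℓ₁ = i₀ := by
    rw [hw₁def, catF_ge (by omega), show ℓ₁ - 1 = n₁ by omega, hc₁n]
  have hw₂ℓ : w₂ ℓ₂ = i₀ := by
    rw [hw₂def, catF_ge (by omega), show ℓ₂ - 1 = n₂ by omega, hc₂n]
  have hw₁step : ∀ t, t + 1 ≤ ℓ₁ → A (w₁ t) (w₁ (t + 1)) = 1 := by
    rw [hℓ₁, hw₁def]
    exact catF_adm (le_refl 1) (fun t ht => absurd ht (by omega))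
      (by simpa [hc₁0] using hj1) (fun t ht => hc₁step t (by omega))
  have hw₂step : ∀ t, t + 1 ≤ ℓ₂ → A (w₂ t) (w₂ (t + 1)) = 1 := by
    rw [hℓ₂, hw₂def]
    exact catF_adm (le_refl 1) (fun t ht => absurd ht (by omega))
      (by simpa [hc₂0] using hj2) (fun t ht => hc₂step t (by omega))
  set L := ℓ₁ + ℓ₂ with hL
  have hLpos : 0 < L := by omega
  set W : Bool → ℕ → Fin N := fun b => bif b then catF w₁ w₂ ℓ₁ else catF w₂ w₁ ℓ₂ with hW
  have hWt : ∀ t, W true t = catF w₁ w₂ ℓ₁ t := fun _ => rfl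
  have hWf : ∀ t, W false t = catF w₂ w₁ ℓ₂ t := fun _ => rfl
  have hW0 : ∀ b, W b 0 = i₀ := by
    intro b
    cases b
    · rw [hWf, catF_lt (by omega)]; exact hw₂0
    · rw [hWt, catF_lt (by omega)]; exact hw₁0
  have hWL : ∀ b, W b L = i₀ := by
    intro b
    cases b
    · rw [hWf, catF_ge (by omega), show L - ℓ₂ = ℓ₁ by omega]; exact hw₁ℓ
    · rw [hWt, catF_ge (by omega), show L - ℓ₁ = ℓ₂ by omega]; exact hw₂ℓ
  have hW1 : ∀ b, W b 1 = (bif b then j₁ else j₂) := by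
    intro b
    cases b
    · rw [hWf, catF_lt (by omega)]; exact hw₂1
    · rw [hWt, catF_lt (by omega)]; exact hw₁1
  have hWstep : ∀ b t, t + 1 ≤ L → A (W b t) (W b (t + 1)) = 1 := by
    intro b t ht
    cases b
    · rw [hWf, hWf]
      refine catF_adm (by omega) (fun u hu => hw₂step u (by omega)) ?_
        (fun u hu => hw₁step u hu) t (by omega)
      have hb := hw₂step (ℓ₂ - 1) (by omega)
      rw [show ℓ₂ - 1 + 1 = ℓ₂ by omega, hw₂ℓ] at hb
      rw [hw₁0]
      exact hb
    · rw [hWt, hWt]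
      refine catF_adm (by omega) (fun u hu => hw₁step u (by omega)) ?_
        (fun u hu => hw₂step u hu) t (by omega)
      have hb := hw₁step (ℓ₁ - 1) (by omega)
      rw [show ℓ₁ - 1 + 1 = ℓ₁ by omega, hw₁ℓ] at hb
      rw [hw₂0]
      exact hb
  set tail : ℕ → Fin N := fun t => W (bseq (t / L)) (t % L) with htaildef
  have htail_eq : ∀ q u, u < L → tail (L * q + u) = W (bseq q) u := by
    intro q u hu
    have h1 : (L * q + u) / L = q := by
      rw [Nat.add_comm, Nat.add_mul_div_left _ _ hLpos, Nat.div_eq_of_lt hu, Nat.zero_add]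
    have h2 : (L * q + u) % L = u := by
      rw [Nat.add_comm, Nat.add_mul_mod_self_left, Nat.mod_eq_of_lt hu]
    rw [htaildef]
    simp only [h1, h2]
  have htail0 : tail 0 = i₀ := by
    have := htail_eq 0 0 hLpos
    simpa using (this.trans (hW0 (bseq 0)))
  have htailstep : ∀ t, A (tail t) (tail (t + 1)) = 1 := by
    intro t
    obtain ⟨q, u, hu, ht⟩ : ∃ q u, u < L ∧ t = L * q + u :=
      ⟨t / L, t % L, Nat.mod_lt t hLpos, (Nat.div_add_mod t L).symm⟩
    rcases Nat.lt_or_ge (u + 1) L with h | h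
    · rw [ht, htail_eq q u hu, show L * q + u + 1 = L * q + (u + 1) by omega,
        htail_eq q (u + 1) h]
      exact hWstep (bseq q) u (by omega)
    · have hu1 : u + 1 = L := by omega
      rw [ht, htail_eq q u hu, show L * q + u + 1 = L * (q + 1) + 0 by rw [Nat.mul_succ]; omega,
        htail_eq (q + 1) 0 hLpos, hW0, ← hWL (bseq q), ← hu1]
      exact hWstep (bseq q) u (by omega)
  have htail_decode : ∀ q, tail (L * q + 1) = (bif bseq q then j₁ else j₂) := by
    intro q
    rw [htail_eq q 1 (by omega)]
    exact hW1 (bseq q)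
  have htail_aper : ∀ d, 1 ≤ d → ∀ s, ¬ (∀ v, s ≤ v → tail (v + d) = tail v) := by
    intro d hd s hper
    have hmul : ∀ k v, s ≤ v → tail (v + k * d) = tail v := by
      intro k
      induction k with
      | zero => intro v _; simp
      | succ k ih =>
        intro v hv
        rw [show v + (k + 1) * d = (v + k * d) + d by ring, hper (v + k * d) (by omega),
          ih v hv]
    obtain ⟨q, hq, hne⟩ := bseq_aperiodic d hd s
    apply hne
    have h1 : tail (L * q + 1 + L * d) = tail (L * q + 1) := by
      apply hmul L (L * q + 1)
      have : q ≤ L * q := Nat.le_mul_of_pos_left q hLpos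
      omega
    rw [show L * q + 1 + L * d = L * (q + d) + 1 by ring, htail_decode, htail_decode] at h1
    cases hb1 : bseq (q + d) <;> cases hb2 : bseq q <;> rw [hb1, hb2] at h1 <;> simp_all
  exact ⟨i₀, tail, htail0, htailstep, htail_aper⟩

private lemma exists_good_point (hA : IsIrredNonPerm A) (x : ↥(MarkovShift A)) (T : ℕ) :
    ∃ z : ↥(MarkovShift A), (∀ m, m ≤ T → z.1 m = x.1 m) ∧
      ∀ r s, s < r → (shift A)^[r] z ≠ (shift A)^[s] z := by
  obtain ⟨i₀, tail, htail0, htailstep, htail_aper⟩ := exists_tail hA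
  obtain ⟨n₃, hn₃, c₃, hc₃0, hc₃n, hc₃step⟩ := exists_path hA (x.1 (T + 1)) i₀
  set tl : ℕ → Fin N := catF c₃ tail n₃ with htl
  have htlstep : ∀ t, A (tl t) (tl (t + 1)) = 1 := by
    intro t
    refine catF_adm (m := t + 1) hn₃ (fun u hu => hc₃step u (by omega)) ?_
      (fun u _ => htailstep u) t (by omega)
    have hb := hc₃step (n₃ - 1) (by omega)
    rw [show n₃ - 1 + 1 = n₃ by omega, hc₃n] at hb
    rw [htail0]
    exact hb
  set zc : ℕ → Fin N := catF x.1 tl (T + 1) with hzc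
  have hzstep : ∀ t, A (zc t) (zc (t + 1)) = 1 := by
    intro t
    refine catF_adm (m := t + 1) (by omega) (fun u hu => x.2 u) ?_
      (fun u _ => htlstep u) t (by omega)
    have h0 : tl 0 = x.1 (T + 1) := by rw [htl, catF_lt (by omega), hc₃0]
    rw [show T + 1 - 1 = T by omega, h0]
    exact x.2 T
  refine ⟨⟨zc, hzstep⟩, fun m hm => catF_lt (by omega), ?_⟩
  intro r s hrs heq
  have hcoord : ∀ t, zc (t + r) = zc (t + s) := by
    intro t
    have h := congrArg (fun w => w.1 t) heq
    simpa [shift_iterate_apply_s11] using h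
  have htp : ∀ v, s ≤ v → tail (v + (r - s)) = tail v := by
    intro v hv
    have e1 : ∀ u, zc (T + 1 + (n₃ + u)) = tail u := by
      intro u
      rw [hzc, catF_add, htl, catF_add]
    have h2 := hcoord (T + 1 + (n₃ + v) - s)
    rw [show T + 1 + (n₃ + v) - s + r = T + 1 + (n₃ + (v + (r - s))) by omega,
      show T + 1 + (n₃ + v) - s + s = T + 1 + (n₃ + v) by omega, e1, e1] at h2
    exact h2
  exact htail_aper (r - s) (by omega) s htp

end Words
section Main
variable {N M : ℕ} {A : Matrix (Fin N) (Fin N) ℕ} {B : Matrix (Fin M) (Fin M) ℕ}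

private lemma ep_of_per_core (hA : IsIrredNonPerm A)
    (h : ↥(MarkovShift A) ≃ₜ ↥(MarkovShift B))
    {k₁ l₁ : ↥(MarkovShift A) → ℕ} (hk : Continuous k₁) (hl : Continuous l₁)
    (hrel : ∀ z, (shift B)^[k₁ z] (h (shift A z)) = (shift B)^[l₁ z] (h z))
    (x : ↥(MarkovShift A)) (p : ℕ) (hp : 1 ≤ p) (hper : (shift A)^[p] x = x) :
    EventuallyPeriodicPt B (h x) := by
  by_cases hFG : cocycleSum A k₁ p x = cocycleSum A l₁ p x
  case neg =>
    have hre := cocycle_rel h k₁ l₁ hrel p x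
    rw [hper] at hre
    rcases Nat.lt_or_ge (cocycleSum A k₁ p x) (cocycleSum A l₁ p x) with hc | hc
    · exact ⟨_, _, hc, hre.symm⟩
    · exact ⟨_, _, lt_of_le_of_ne hc (fun hcc => hFG hcc.symm), hre⟩
  case pos =>
  exfalso
  set K := cocycleSum A k₁ p x with hKdef
  set V : Set ↥(MarkovShift A) :=
    (cocycleSum A k₁ p) ⁻¹' {K} ∩ (cocycleSum A l₁ p) ⁻¹' {K} with hV
  have hVopen : IsOpen V :=
    (((cocycleSum_continuous hk p).isOpen_preimage _ (isOpen_discrete _)).inter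
      ((cocycleSum_continuous hl p).isOpen_preimage _ (isOpen_discrete _)))
  have hxV : x ∈ V := ⟨rfl, hFG.symm⟩
  set n := M ^ K with hn
  choose z hzpre hznep using fun T => exists_good_point hA x T
  have hxper : ∀ i : ℕ, (shift A)^[i * p] x = x := by
    intro i
    rw [Nat.mul_comm, Function.iterate_mul]
    exact Function.iterate_fixed hper i
  have htendsto : Filter.Tendsto z Filter.atTop (nhds x) := by
    rw [tendsto_subtype_rng, tendsto_pi_nhds]
    intro m
    exact tendsto_atTop_of_eventually_const (i₀ := m) (fun T hT => hzpre T m hT)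
  have hiter : ∀ i : ℕ,
      Filter.Tendsto (fun T => (shift A)^[i * p] (z T)) Filter.atTop (nhds x) := by
    intro i
    have := ((shift_iterate_continuous (i * p)).tendsto x).comp htendsto
    rwa [hxper i] at this
  have hev : ∀ᶠ T in Filter.atTop,
      ∀ i ∈ Finset.range (n + 1), (shift A)^[i * p] (z T) ∈ V := by
    rw [Filter.eventually_all_finset]
    intro i _
    exact (hiter i).eventually (hVopen.mem_nhds hxV)
  obtain ⟨T, hT⟩ := hev.exists
  set w := z T with hw
  have hchain : ∀ i, i ≤ n →
      (shift B)^[K] (h ((shift A)^[i * p] w)) = (shift B)^[K] (h w) := by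
    intro i
    induction i with
    | zero => intro _; rw [Nat.zero_mul, Function.iterate_zero_apply]
    | succ i ih =>
      intro hi
      have hiV : (shift A)^[i * p] w ∈ V := hT i (Finset.mem_range.mpr (by omega))
      have hrel2 := cocycle_rel h k₁ l₁ hrel p ((shift A)^[i * p] w)
      rw [Set.mem_singleton_iff.mp hiV.1, Set.mem_singleton_iff.mp hiV.2] at hrel2
      calc (shift B)^[K] (h ((shift A)^[(i + 1) * p] w))
          = (shift B)^[K] (h ((shift A)^[i * p] w)) := by
            rw [show (i + 1) * p = p + i * p by ring, Function.iterate_add_apply]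
            exact hrel2
        _ = (shift B)^[K] (h w) := ih (by omega)
  have hnz : ∀ r s, s < r → (shift A)^[r] w ≠ (shift A)^[s] w := hznep T
  have hKcoord : ∀ i, i ≤ n → ∀ u,
      (h ((shift A)^[i * p] w)).1 (u + K) = ((shift B)^[K] (h w)).1 u := by
    intro i hi u
    rw [← shift_iterate_apply_s11 K (h ((shift A)^[i * p] w)) u, hchain i hi]
  set φ : Fin (n + 1) → (Fin K → Fin M) :=
    fun i j => (h ((shift A)^[i.1 * p] w)).1 j.1 with hφ
  have hφinj : Function.Injective φ := by
    intro i i' hφeq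
    have heq : h ((shift A)^[i.1 * p] w) = h ((shift A)^[i'.1 * p] w) := by
      apply Subtype.ext
      funext u
      rcases Nat.lt_or_ge u K with hu | hu
      · exact congrFun hφeq ⟨u, hu⟩
      · rw [show u = (u - K) + K by omega, hKcoord i.1 (Nat.lt_succ_iff.mp i.2) (u - K),
          hKcoord i'.1 (Nat.lt_succ_iff.mp i'.2) (u - K)]
    have heq2 : (shift A)^[i.1 * p] w = (shift A)^[i'.1 * p] w := h.injective heq
    by_contra hne
    have hne' : i.1 ≠ i'.1 := fun hcc => hne (Fin.ext hcc)
    rcases Nat.lt_or_ge i.1 i'.1 with hlt | hge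
    · exact hnz (i'.1 * p) (i.1 * p) (by nlinarith) heq2.symm
    · have hlt : i'.1 < i.1 := by omega
      exact hnz (i.1 * p) (i'.1 * p) (by nlinarith) heq2
  have hcard := Fintype.card_le_of_injective φ hφinj
  simp only [Fintype.card_fun, Fintype.card_fin] at hcard
  omega

private lemma coe_forward_ep (hA : IsIrredNonPerm A)
    (h : ↥(MarkovShift A) ≃ₜ ↥(MarkovShift B))
    {k₁ l₁ : ↥(MarkovShift A) → ℕ} (hk : Continuous k₁) (hl : Continuous l₁)
    (hrel : ∀ z, (shift B)^[k₁ z] (h (shift A z)) = (shift B)^[l₁ z] (h z))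
    (x : ↥(MarkovShift A)) (hx : EventuallyPeriodicPt A x) :
    EventuallyPeriodicPt B (h x) := by
  obtain ⟨r, s, hrs, heq⟩ := hx
  have hper : (shift A)^[r - s] ((shift A)^[s] x) = (shift A)^[s] x := by
    rw [← Function.iterate_add_apply, show r - s + s = r by omega, heq]
  have hcore := ep_of_per_core hA h hk hl hrel ((shift A)^[s] x) (r - s) (by omega) hper
  have h3 := ep_shift (cocycleSum A k₁ s x) hcore
  rw [cocycle_rel h k₁ l₁ hrel s x] at h3
  exact ep_of_shift _ h3

end Main
/-- a homeomorphism giving rise to a continuous orbit equivalence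
preserves eventually periodic points. -/
theorem coe_preserves_eventually_periodic {N M : ℕ}
    (A : Matrix (Fin N) (Fin N) ℕ) (B : Matrix (Fin M) (Fin M) ℕ)
    (hA : IsIrredNonPerm A) (hB : IsIrredNonPerm B)
    (h : ↥(MarkovShift A) ≃ₜ ↥(MarkovShift B))
    (hw : ∃ k₁ l₁ k₂ l₂, COEWitness A B h k₁ l₁ k₂ l₂) :
    ∀ x : ↥(MarkovShift A), EventuallyPeriodicPt A x ↔ EventuallyPeriodicPt B (h x) := by
  obtain ⟨k₁, l₁, k₂, l₂, hk1, hl1, hk2, hl2, hrel1, hrel2⟩ := hw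
  intro x
  constructor
  · exact coe_forward_ep hA h hk1 hl1 hrel1 x
  · intro hep
    have := coe_forward_ep hB h.symm hk2 hl2 hrel2 (h x) hep
    rwa [Homeomorph.symm_apply_apply] at this
end

section
/- Let A and B be irreducible non-permutation {0,1}-matrices, and let h: X_A → X_B be a homeomorphism giving rise to a continuous orbit equivalence with continuous functions k_1, l_1: X_A → ℤ_{≥0} and k_2, l_2: X_B → ℤ_{≥0}. Then for every y ∈ X_B the identity k_1^{l_2(y)}(h^{-1}(y)) + l_1^{k_2(y)}(h^{-1}(σ_B(y))) + 1 = k_1^{k_2(y)}(h^{-1}(σ_B(y))) + l_1^{l_2(y)}(h^{-1}(y)) holds, where for a function f: X_A → ℤ and k ∈ ℤ_{≥0} one sets f^k(x) = Σ_{i=0}^{k−1} f(σ_A^i(x)). -/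
private lemma mk_shift_iter_val {M : ℕ} {B : Matrix (Fin M) (Fin M) ℕ}
    (r : ℕ) (x : ↥(MarkovShift B)) (n : ℕ) :
    ((shift B)^[r] x).1 n = x.1 (n + r) := by
  induction r generalizing x n with
  | zero => rfl
  | succ r ih =>
    rw [Function.iterate_succ_apply, ih]
    show x.1 (n + r + 1) = x.1 (n + (r + 1))
    rfl

private lemma mk_continuous_shift {M : ℕ} (B : Matrix (Fin M) (Fin M) ℕ) :
    Continuous (shift B) := by
  have h1 : Continuous fun (x : ↥(MarkovShift B)) (n : ℕ) => x.1 (n + 1) :=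
    continuous_pi fun n => (continuous_apply (n + 1)).comp continuous_subtype_val
  exact h1.subtype_mk _

private lemma mk_entry_one {M : ℕ} {B : Matrix (Fin M) (Fin M) ℕ}
    (hB : IsIrredNonPerm B) {i j : Fin M} (h : 0 < B i j) : B i j = 1 := by
  rcases hB.zero_one i j with h0 | h1
  · omega
  · exact h1

private lemma mk_path_of_pow_pos {M : ℕ} {B : Matrix (Fin M) (Fin M) ℕ}
    (hB : IsIrredNonPerm B) :
    ∀ (n : ℕ) (i j : Fin M), 0 < (B ^ n) i j →
      ∃ p : ℕ → Fin M, p 0 = i ∧ p n = j ∧ ∀ t < n, B (p t) (p (t + 1)) = 1 := by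
  intro n
  induction n with
  | zero =>
    intro i j hp
    rw [pow_zero, Matrix.one_apply] at hp
    by_cases hij : i = j
    · exact ⟨fun _ => i, rfl, hij, fun t ht => absurd ht (Nat.not_lt_zero t)⟩
    · simp [hij] at hp
  | succ n ih =>
    intro i j hp
    rw [pow_succ, Matrix.mul_apply] at hp
    have hex : ∃ k, 0 < (B ^ n) i k * B k j := by
      by_contra hc
      push_neg at hc
      have : (∑ k, (B ^ n) i k * B k j) = 0 :=
        Finset.sum_eq_zero fun k _ => Nat.le_zero.mp (hc k)
      omega
    obtain ⟨k, hk⟩ := hex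
    have hk1 : 0 < (B ^ n) i k := by
      rcases Nat.eq_zero_or_pos ((B ^ n) i k) with h0 | h0
      · simp [h0] at hk
      · exact h0
    have hk2 : 0 < B k j := by
      rcases Nat.eq_zero_or_pos (B k j) with h0 | h0
      · simp [h0] at hk
      · exact h0
    obtain ⟨p, hp0, hpn, hpe⟩ := ih i k hk1
    refine ⟨fun t => if t = n + 1 then j else p t, by simp [hp0], by simp, ?_⟩
    intro t ht
    by_cases htn : t = n
    · subst htn
      simp [Nat.lt_irrefl, hpn, mk_entry_one hB hk2]
    · have h1 : t ≠ n + 1 := by omega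
      have h2 : t + 1 ≠ n + 1 := by omega
      simp only [h1, h2, if_false]
      exact hpe t (by omega)

private lemma mk_exists_path {M : ℕ} {B : Matrix (Fin M) (Fin M) ℕ}
    (hB : IsIrredNonPerm B) (i j : Fin M) :
    ∃ (n : ℕ) (p : ℕ → Fin M), 1 ≤ n ∧ p 0 = i ∧ p n = j ∧
      ∀ t < n, B (p t) (p (t + 1)) = 1 := by
  obtain ⟨n, hn, hpos⟩ := hB.irreducible i j
  obtain ⟨p, h0, h1, h2⟩ := mk_path_of_pow_pos hB n i j hpos
  exact ⟨n, p, hn, h0, h1, h2⟩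

private lemma mk_exists_double {M : ℕ} {B : Matrix (Fin M) (Fin M) ℕ}
    (hB : IsIrredNonPerm B) :
    ∃ i₀ j₁ j₂ : Fin M, j₁ ≠ j₂ ∧ B i₀ j₁ = 1 ∧ B i₀ j₂ = 1 := by
  by_contra hc
  push_neg at hc
  have huniq : ∀ i j j', B i j = 1 → B i j' = 1 → j = j' := by
    intro i j j' hj hj'
    by_contra hne
    exact (hc i j j' hne hj) hj'
  have hrow : ∀ i : Fin M, ∃ j, B i j = 1 := by
    intro i
    obtain ⟨n, p, hn, hp0, _, hpe⟩ := mk_exists_path hB i i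
    exact ⟨p 1, hp0 ▸ hpe 0 hn⟩
  set f : Fin M → Fin M := fun i => Classical.choose (hrow i) with hf
  have hfe : ∀ i, B i (f i) = 1 := fun i => Classical.choose_spec (hrow i)
  have hsurj : Function.Surjective f := by
    intro j
    obtain ⟨n, p, hn, hp0, hpn, hpe⟩ := mk_exists_path hB j j
    have hiter : ∀ t, t ≤ n → p t = f^[t] j := by
      intro t ht
      induction t with
      | zero => simpa using hp0
      | succ t ih =>
        have h1 : p (t + 1) = f (p t) := huniq (p t) _ _ (hpe t (by omega)) (hfe (p t))
        rw [h1, ih (by omega), ← Function.iterate_succ_apply' f t j]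
    have h2 : f^[n] j = j := by rw [← hiter n le_rfl, hpn]
    refine ⟨f^[n - 1] j, ?_⟩
    have : f (f^[n - 1] j) = f^[n] j := by
      rw [← Function.iterate_succ_apply' f (n - 1) j]
      congr 1; omega
    rw [this, h2]
  have hbij : Function.Bijective f := ⟨Finite.injective_iff_surjective.mpr hsurj, hsurj⟩
  apply hB.not_perm
  refine ⟨Equiv.ofBijective f hbij, fun i j => ?_⟩
  by_cases hj : f i = j
  · subst hj
    simpa [Equiv.ofBijective] using hfe i
  · have : B i j = 0 := by
      rcases hB.zero_one i j with h0 | h1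
      · exact h0
      · exact absurd (huniq i j (f i) h1 (hfe i)) (fun hh => hj hh.symm)
    simpa [Equiv.ofBijective, hj] using this

private lemma mk_exists_loop {M : ℕ} {B : Matrix (Fin M) (Fin M) ℕ}
    (hB : IsIrredNonPerm B) {i₀ j : Fin M} (hij : B i₀ j = 1) :
    ∃ c, 2 ≤ c ∧ ∃ ℓ : ℕ → Fin M, (∀ t, ℓ (t + c) = ℓ t) ∧
      (∀ t, B (ℓ t) (ℓ (t + 1)) = 1) ∧ ℓ 0 = i₀ ∧ ℓ 1 = j := by
  obtain ⟨n, p, hn, hp0, hpn, hpe⟩ := mk_exists_path hB j i₀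
  set c := n + 1 with hc
  have hc2 : 2 ≤ c := by omega
  set q : ℕ → Fin M := fun t => if t = 0 then i₀ else p (t - 1) with hq
  have hq0 : q 0 = i₀ := by simp [hq]
  have hq1 : q 1 = j := by simp [hq, hp0]
  have hqc : q c = i₀ := by
    have : c ≠ 0 := by omega
    simp only [hq, this, if_false, hc]
    simpa using hpn
  have hkey : ∀ a, a < c → B (q a) (q (a + 1)) = 1 := by
    intro a hac
    rcases Nat.eq_zero_or_pos a with h0 | h0
    · subst h0; rw [hq0, hq1]; exact hij
    · have h1 : a ≠ 0 := by omega
      have h2 : a + 1 ≠ 0 := by omega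
      simp only [hq, h1, h2, if_false]
      have : a - 1 + 1 = a := by omega
      rw [← this]
      exact hpe (a - 1) (by omega)
  refine ⟨c, hc2, fun t => q (t % c), fun t => ?_, fun t => ?_, ?_, ?_⟩
  · show q ((t + c) % c) = q (t % c)
    rw [Nat.add_mod_right]
  · show B (q (t % c)) (q ((t + 1) % c)) = 1
    have hac : t % c < c := Nat.mod_lt _ (by omega)
    have hm : (t + 1) % c = (t % c + 1) % c := by
      conv_lhs => rw [Nat.add_mod]
      rw [Nat.mod_eq_of_lt (show 1 < c by omega)]
    rcases Nat.lt_or_ge (t % c + 1) c with hlt | hge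
    · rw [hm, Nat.mod_eq_of_lt hlt]
      exact hkey _ hac
    · have heq : t % c + 1 = c := by omega
      have h2 : q (t % c + 1) = i₀ := by rw [heq, hqc]
      rw [hm, heq, Nat.mod_self, hq0, ← h2]
      exact hkey _ hac
  · show q (0 % c) = i₀
    rw [Nat.zero_mod, hq0]
  · show q (1 % c) = j
    rw [Nat.mod_eq_of_lt (show 1 < c by omega), hq1]

private lemma mk_per_mul {M : ℕ} {ℓ : ℕ → Fin M} {c : ℕ}
    (hp : ∀ t, ℓ (t + c) = ℓ t) : ∀ k t, ℓ (t + c * k) = ℓ t := by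
  intro k
  induction k with
  | zero => simp
  | succ k ih =>
    intro t
    have : t + c * (k + 1) = (t + c * k) + c := by ring
    rw [this, hp, ih]

private lemma mk_two_loops {M : ℕ} {B : Matrix (Fin M) (Fin M) ℕ}
    (hB : IsIrredNonPerm B) :
    ∃ (C : ℕ) (i₀ : Fin M) (ℓ₁ ℓ₂ : ℕ → Fin M), 2 ≤ C ∧
      (∀ t, ℓ₁ (t + C) = ℓ₁ t) ∧ (∀ t, ℓ₂ (t + C) = ℓ₂ t) ∧
      (∀ t, B (ℓ₁ t) (ℓ₁ (t + 1)) = 1) ∧ (∀ t, B (ℓ₂ t) (ℓ₂ (t + 1)) = 1) ∧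
      ℓ₁ 0 = i₀ ∧ ℓ₂ 0 = i₀ ∧ ℓ₁ 1 ≠ ℓ₂ 1 := by
  obtain ⟨i₀, j₁, j₂, hne, h1, h2⟩ := mk_exists_double hB
  obtain ⟨c₁, hc1, ℓ₁, hp1, he1, h10, h11⟩ := mk_exists_loop hB h1
  obtain ⟨c₂, hc2, ℓ₂, hp2, he2, h20, h21⟩ := mk_exists_loop hB h2
  refine ⟨c₁ * c₂, i₀, ℓ₁, ℓ₂, ?_, fun t => mk_per_mul hp1 c₂ t, fun t => ?_,
    he1, he2, h10, h20, by rw [h11, h21]; exact hne⟩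
  · calc 2 ≤ c₁ := hc1
      _ ≤ c₁ * c₂ := Nat.le_mul_of_pos_right _ (by omega)
  · have : c₁ * c₂ = c₂ * c₁ := by ring
    rw [this]
    exact mk_per_mul hp2 c₁ t

private lemma mk_sq_witness (d s : ℕ) (hd : 0 < d) :
    ∃ k, s ≤ k ∧ (Nat.sqrt k * Nat.sqrt k = k) ∧
      ¬(Nat.sqrt (k + d) * Nat.sqrt (k + d) = k + d) := by
  set n := max s d + 1 with hn
  have hsn : s ≤ n := by omega
  have hdn : d < n := by omega
  refine ⟨n * n, le_trans hsn (Nat.le_mul_of_pos_left n (by omega)), ?_, ?_⟩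
  · have hs : Nat.sqrt (n * n) = n := by
      have := Nat.sqrt_eq' n
      rwa [pow_two] at this
    rw [hs]
  · have h1 : n ≤ Nat.sqrt (n * n + d) := Nat.le_sqrt.mpr (by omega)
    have h2 : Nat.sqrt (n * n + d) < n + 1 := Nat.sqrt_lt.mpr (by nlinarith)
    have h3 : Nat.sqrt (n * n + d) = n := by omega
    rw [h3]
    omega

private lemma mk_aperiodic_near {M : ℕ} {B : Matrix (Fin M) (Fin M) ℕ}
    (hB : IsIrredNonPerm B) (y : ↥(MarkovShift B)) {V : Set ↥(MarkovShift B)}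
    (hV : IsOpen V) (hy : y ∈ V) :
    ∃ x ∈ V, ¬ EventuallyPeriodicPt B x := by
  obtain ⟨W, hW, hWV⟩ := isOpen_induced_iff.mp hV
  have hyW : y.1 ∈ W := by rw [← hWV] at hy; exact hy
  obtain ⟨I, u, hu, hIW⟩ := isOpen_pi_iff.mp hW y.1 hyW
  set K := I.sup id + 1 with hK
  have hIK : ∀ i ∈ I, i < K := fun i hi =>
    lt_of_le_of_lt (Finset.le_sup (f := id) hi) (Nat.lt_succ_self _)
  obtain ⟨C, i₀, ℓ₁, ℓ₂, hC2, hper1, hper2, he1, he2, h10, h20, hne12⟩ := mk_two_loops hB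
  obtain ⟨n₀, r, hn₀, hr0, hrn, hre⟩ := mk_exists_path hB (y.1 K) i₀
  set T := K + n₀ with hT
  have hC0 : 0 < C := by omega
  set tail : ℕ → Fin M := fun v =>
    if Nat.sqrt (v / C) * Nat.sqrt (v / C) = v / C then ℓ₁ (v % C) else ℓ₂ (v % C)
    with htail
  have htailblock : ∀ k a, a < C → tail (C * k + a) =
      if Nat.sqrt k * Nat.sqrt k = k then ℓ₁ a else ℓ₂ a := by
    intro k a ha
    have h1 : C * k + a = a + k * C := by ring
    have hdiv : (C * k + a) / C = k := by
      rw [h1, Nat.add_mul_div_right _ _ hC0, Nat.div_eq_of_lt ha, Nat.zero_add]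
    have hmod : (C * k + a) % C = a := by
      rw [h1, Nat.add_mul_mod_self_right, Nat.mod_eq_of_lt ha]
    simp only [htail, hdiv, hmod]
  have htail0 : tail 0 = i₀ := by
    have h0 := htailblock 0 0 hC0
    simp only [Nat.mul_zero, Nat.add_zero, Nat.sqrt_zero] at h0
    rw [h0]
    simp [h10, h20]
  have htailedge : ∀ v, B (tail v) (tail (v + 1)) = 1 := by
    intro v
    have hdm := Nat.div_add_mod v C
    set k := v / C with hk
    set a := v % C with ha
    have haC : a < C := Nat.mod_lt _ hC0
    have hveq : v = C * k + a := hdm.symm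
    rcases Nat.lt_or_ge (a + 1) C with hlt | hge
    · have hv1 : v + 1 = C * k + (a + 1) := by omega
      rw [hv1, hveq, htailblock k a haC, htailblock k (a + 1) hlt]
      by_cases hP : Nat.sqrt k * Nat.sqrt k = k
      · simp only [hP, if_true]; exact he1 a
      · simp only [hP, if_false]; exact he2 a
    · have haeq : a + 1 = C := by omega
      have hCk : C * (k + 1) = C * k + C := by ring
      have hv1 : v + 1 = C * (k + 1) + 0 := by omega
      rw [hv1, hveq, htailblock k a haC, htailblock (k + 1) 0 hC0]
      have h0 : (if Nat.sqrt (k + 1) * Nat.sqrt (k + 1) = k + 1 then ℓ₁ 0 else ℓ₂ 0)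
          = i₀ := by
        split
        · exact h10
        · exact h20
      rw [h0]
      have hc1 : ℓ₁ (a + 1) = i₀ := by
        rw [haeq]
        have h3 := hper1 0
        rw [Nat.zero_add] at h3
        rw [h3, h10]
      have hc2 : ℓ₂ (a + 1) = i₀ := by
        rw [haeq]
        have h3 := hper2 0
        rw [Nat.zero_add] at h3
        rw [h3, h20]
      by_cases hP : Nat.sqrt k * Nat.sqrt k = k
      · simp only [hP, if_true]
        rw [← hc1]
        exact he1 a
      · simp only [hP, if_false]
        rw [← hc2]
        exact he2 a
  set xf : ℕ → Fin M := fun t =>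
    if t < K then y.1 t else if t < T then r (t - K) else tail (t - T) with hxf
  have hxy : ∀ s, s ≤ K → xf s = y.1 s := by
    intro s hs
    rcases Nat.lt_or_ge s K with h | h
    · simp only [hxf]; rw [if_pos h]
    · have hsK : s = K := by omega
      subst hsK
      simp only [hxf]
      rw [if_neg (by omega), if_pos (by omega), Nat.sub_self, hr0]
  have hxr : ∀ s, K ≤ s → s ≤ T → xf s = r (s - K) := by
    intro s h1 h2
    rcases Nat.lt_or_ge s T with h | h
    · simp only [hxf]; rw [if_neg (by omega), if_pos h]
    · have hsT : s = T := by omega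
      rw [hsT]
      simp only [hxf]
      rw [if_neg (by omega), if_neg (by omega), Nat.sub_self, htail0,
        show T - K = n₀ by omega, hrn]
  have hxt : ∀ v, xf (T + v) = tail v := by
    intro v
    simp only [hxf]
    rw [if_neg (by omega), if_neg (by omega), Nat.add_sub_cancel_left]
  have hmem : xf ∈ MarkovShift B := by
    intro t
    rcases Nat.lt_or_ge (t + 1) (K + 1) with h1 | h1
    · rw [hxy t (by omega), hxy (t + 1) (by omega)]
      exact y.2 t
    · rcases Nat.lt_or_ge t T with h2 | h2
      · rw [hxr t (by omega) (by omega), hxr (t + 1) (by omega) (by omega),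
          show t + 1 - K = (t - K) + 1 by omega]
        exact hre (t - K) (by omega)
      · have e1 : t = T + (t - T) := by omega
        have e2 : t + 1 = T + ((t - T) + 1) := by omega
        have h3 := htailedge (t - T)
        rw [← hxt, ← hxt, ← e1, ← e2] at h3
        exact h3
  refine ⟨⟨xf, hmem⟩, ?_, ?_⟩
  · rw [← hWV]
    exact hIW fun i hi => by
      show xf i ∈ u i
      rw [hxy i (Nat.le_of_lt (hIK i (Finset.mem_coe.mp hi)))]
      exact (hu i (Finset.mem_coe.mp hi)).2
  · rintro ⟨ρ, s, hsρ, heq⟩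
    have hfun : ∀ nn, xf (nn + ρ) = xf (nn + s) := by
      intro nn
      have h0 : ((shift B)^[ρ] (⟨xf, hmem⟩ : ↥(MarkovShift B))).1 nn
          = ((shift B)^[s] (⟨xf, hmem⟩ : ↥(MarkovShift B))).1 nn := by rw [heq]
      rw [mk_shift_iter_val, mk_shift_iter_val] at h0
      exact h0
    set d := ρ - s with hd
    have hd0 : 0 < d := by omega
    have hper : ∀ t, s ≤ t → xf (t + d) = xf t := by
      intro t ht
      have h0 := hfun (t - s)
      rwa [show t - s + ρ = t + d by omega, show t - s + s = t by omega] at h0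
    have hperm : ∀ j t, s ≤ t → xf (t + d * j) = xf t := by
      intro j
      induction j with
      | zero => intro t ht; simp
      | succ j ih =>
        intro t ht
        rw [show t + d * (j + 1) = (t + d * j) + d by ring,
          hper _ (by omega), ih t ht]
    have hval : ∀ k, xf (T + (C * k + 1)) =
        if Nat.sqrt k * Nat.sqrt k = k then ℓ₁ 1 else ℓ₂ 1 := by
      intro k
      rw [hxt, htailblock k 1 (by omega)]
    have hstep : ∀ k, s ≤ k → (Nat.sqrt k * Nat.sqrt k = k ↔
        Nat.sqrt (k + d) * Nat.sqrt (k + d) = k + d) := by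
      intro k hk
      have hkC : k ≤ C * k := Nat.le_mul_of_pos_left k hC0
      have h0 := hperm C (T + (C * k + 1)) (by omega)
      rw [show T + (C * k + 1) + d * C = T + (C * (k + d) + 1) by ring,
        hval (k + d), hval k] at h0
      by_cases hP : Nat.sqrt k * Nat.sqrt k = k <;>
        by_cases hQ : Nat.sqrt (k + d) * Nat.sqrt (k + d) = k + d
      · exact iff_of_true hP hQ
      · rw [if_pos hP, if_neg hQ] at h0
        exact absurd h0.symm hne12
      · rw [if_neg hP, if_pos hQ] at h0
        exact absurd h0 hne12
      · exact iff_of_false hP hQ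
    obtain ⟨k, hks, hk1, hk2⟩ := mk_sq_witness d s hd0
    exact hk2 ((hstep k hks).mp hk1)


private lemma mk_cont_cocycle {N : ℕ} {A : Matrix (Fin N) (Fin N) ℕ}
    {Y : Type*} [TopologicalSpace Y] {f : ↥(MarkovShift A) → ℕ}
    {c : Y → ℕ} {g : Y → ↥(MarkovShift A)}
    (hf : Continuous f) (hc : Continuous c) (hg : Continuous g) :
    Continuous fun y => cocycleSum A f (c y) (g y) := by
  rw [continuous_iff_continuousAt]
  intro y
  have hfix : Continuous fun w => cocycleSum A f (c y) (g w) := by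
    unfold cocycleSum
    exact continuous_finset_sum _ fun i _ =>
      hf.comp (((mk_continuous_shift A).iterate i).comp hg)
  refine hfix.continuousAt.congr ?_
  have hev : c ⁻¹' {c y} ∈ nhds y :=
    hc.continuousAt.preimage_mem_nhds ((isOpen_discrete _).mem_nhds rfl)
  filter_upwards [hev] with w hw
  have hw' : c w = c y := hw
  rw [hw']

private lemma mk_coe_iterate {N M : ℕ} {A : Matrix (Fin N) (Fin N) ℕ}
    {B : Matrix (Fin M) (Fin M) ℕ} {h : ↥(MarkovShift A) ≃ₜ ↥(MarkovShift B)}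
    {k₁ l₁ : ↥(MarkovShift A) → ℕ}
    (hrel : ∀ x, (shift B)^[k₁ x] (h (shift A x)) = (shift B)^[l₁ x] (h x)) :
    ∀ (n : ℕ) (x : ↥(MarkovShift A)),
      (shift B)^[cocycleSum A k₁ n x] (h ((shift A)^[n] x))
        = (shift B)^[cocycleSum A l₁ n x] (h x) := by
  intro n
  induction n with
  | zero => intro x; simp [cocycleSum]
  | succ n ih =>
    intro x
    have e1 : cocycleSum A k₁ (n + 1) x
        = cocycleSum A k₁ n x + k₁ ((shift A)^[n] x) := Finset.sum_range_succ _ n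
    have e2 : cocycleSum A l₁ (n + 1) x
        = cocycleSum A l₁ n x + l₁ ((shift A)^[n] x) := Finset.sum_range_succ _ n
    rw [e1, e2, Function.iterate_succ_apply' (shift A) n x,
      Function.iterate_add_apply, hrel ((shift A)^[n] x), iter_swap, ih,
      ← Function.iterate_add_apply, Nat.add_comm]

private lemma mk_key_ep {N M : ℕ}
    (A : Matrix (Fin N) (Fin N) ℕ) (B : Matrix (Fin M) (Fin M) ℕ)
    (h : ↥(MarkovShift A) ≃ₜ ↥(MarkovShift B))
    (k₁ l₁ : ↥(MarkovShift A) → ℕ) (k₂ l₂ : ↥(MarkovShift B) → ℕ)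
    (hw : COEWitness A B h k₁ l₁ k₂ l₂) (y : ↥(MarkovShift B))
    (hne : cocycleSum A k₁ (l₂ y) (h.symm y)
        + cocycleSum A l₁ (k₂ y) (h.symm (shift B y)) + 1 ≠
      cocycleSum A k₁ (k₂ y) (h.symm (shift B y))
        + cocycleSum A l₁ (l₂ y) (h.symm y)) :
    EventuallyPeriodicPt B y := by
  obtain ⟨-, -, -, -, hrel1, hrel2⟩ := hw
  set p := cocycleSum A k₁ (l₂ y) (h.symm y) with hp
  set q := cocycleSum A l₁ (l₂ y) (h.symm y) with hq
  set p' := cocycleSum A k₁ (k₂ y) (h.symm (shift B y)) with hp'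
  set q' := cocycleSum A l₁ (k₂ y) (h.symm (shift B y)) with hq'
  set z := h ((shift A)^[l₂ y] (h.symm y)) with hz
  have hz1 : (shift B)^[p] z = (shift B)^[q] y := by
    have h0 := mk_coe_iterate hrel1 (l₂ y) (h.symm y)
    rwa [h.apply_symm_apply] at h0
  have hz2 : (shift B)^[p'] z = (shift B)^[q' + 1] y := by
    have h0 := mk_coe_iterate hrel1 (k₂ y) (h.symm (shift B y))
    rw [hrel2 y, h.apply_symm_apply] at h0
    rw [Function.iterate_succ_apply]
    exact h0
  have hzz : (shift B)^[q' + 1 + p] z = (shift B)^[q + p'] z := by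
    calc (shift B)^[q' + 1 + p] z
        = (shift B)^[q' + 1] ((shift B)^[p] z) := Function.iterate_add_apply _ _ _ _
      _ = (shift B)^[q' + 1] ((shift B)^[q] y) := by rw [hz1]
      _ = (shift B)^[q] ((shift B)^[q' + 1] y) := iter_swap _ _ _ _
      _ = (shift B)^[q] ((shift B)^[p'] z) := by rw [hz2]
      _ = (shift B)^[q + p'] z := (Function.iterate_add_apply _ _ _ _).symm
  have hyy : (shift B)^[q' + 1 + p + q] y = (shift B)^[q + p' + q] y := by
    calc (shift B)^[q' + 1 + p + q] y
        = (shift B)^[q' + 1 + p] ((shift B)^[q] y) := Function.iterate_add_apply _ _ _ _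
      _ = (shift B)^[q' + 1 + p] ((shift B)^[p] z) := by rw [hz1]
      _ = (shift B)^[p] ((shift B)^[q' + 1 + p] z) := iter_swap _ _ _ _
      _ = (shift B)^[p] ((shift B)^[q + p'] z) := by rw [hzz]
      _ = (shift B)^[q + p'] ((shift B)^[p] z) := iter_swap _ _ _ _
      _ = (shift B)^[q + p'] ((shift B)^[q] y) := by rw [hz1]
      _ = (shift B)^[q + p' + q] y := (Function.iterate_add_apply _ _ _ _).symm
  rcases Nat.lt_or_ge (q' + 1 + p + q) (q + p' + q) with hlt | hge
  · exact ⟨_, _, hlt, hyy.symm⟩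
  · have hlt' : q + p' + q < q' + 1 + p + q := by omega
    exact ⟨_, _, hlt', hyy⟩

/-- the fundamental cocycle identity
`k₁^{l₂(y)}(h⁻¹(y)) + l₁^{k₂(y)}(h⁻¹(σ_B(y))) + 1
  = k₁^{k₂(y)}(h⁻¹(σ_B(y))) + l₁^{l₂(y)}(h⁻¹(y))`. -/
theorem cocycle_identity {N M : ℕ}
    (A : Matrix (Fin N) (Fin N) ℕ) (B : Matrix (Fin M) (Fin M) ℕ)
    (hA : IsIrredNonPerm A) (hB : IsIrredNonPerm B)
    (h : ↥(MarkovShift A) ≃ₜ ↥(MarkovShift B))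
    (k₁ l₁ : ↥(MarkovShift A) → ℕ) (k₂ l₂ : ↥(MarkovShift B) → ℕ)
    (hw : COEWitness A B h k₁ l₁ k₂ l₂) (y : ↥(MarkovShift B)) :
    cocycleSum A k₁ (l₂ y) (h.symm y) + cocycleSum A l₁ (k₂ y) (h.symm (shift B y)) + 1 =
      cocycleSum A k₁ (k₂ y) (h.symm (shift B y)) + cocycleSum A l₁ (l₂ y) (h.symm y) := by
  by_contra hne
  have hm : Continuous fun w : ↥(MarkovShift B) =>
      cocycleSum A k₁ (l₂ w) (h.symm w)
        + cocycleSum A l₁ (k₂ w) (h.symm (shift B w)) + 1 := by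
    obtain ⟨hk₁, hl₁, hk₂, hl₂, -, -⟩ := hw
    exact ((mk_cont_cocycle hk₁ hl₂ h.symm.continuous).add
      (mk_cont_cocycle hl₁ hk₂
        (h.symm.continuous.comp (mk_continuous_shift B)))).add continuous_const
  have hn : Continuous fun w : ↥(MarkovShift B) =>
      cocycleSum A k₁ (k₂ w) (h.symm (shift B w))
        + cocycleSum A l₁ (l₂ w) (h.symm w) := by
    obtain ⟨hk₁, hl₁, hk₂, hl₂, -, -⟩ := hw
    exact (mk_cont_cocycle hk₁ hk₂
        (h.symm.continuous.comp (mk_continuous_shift B))).add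
      (mk_cont_cocycle hl₁ hl₂ h.symm.continuous)
  have hUopen : IsOpen {w : ↥(MarkovShift B) |
      cocycleSum A k₁ (l₂ w) (h.symm w)
        + cocycleSum A l₁ (k₂ w) (h.symm (shift B w)) + 1 ≠
      cocycleSum A k₁ (k₂ w) (h.symm (shift B w))
        + cocycleSum A l₁ (l₂ w) (h.symm w)} :=
    IsOpen.preimage (hm.prodMk hn) (isOpen_discrete {pq : ℕ × ℕ | pq.1 ≠ pq.2})
  obtain ⟨x, hxU, hxnp⟩ := mk_aperiodic_near hB y hUopen hne
  exact hxnp (mk_key_ep A B h k₁ l₁ k₂ l₂ hw x hxU)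
end
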